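/- arXiv:1406.5706 — 10 statements merged into one kernel-verified Lean document; each statement's English description precedes it below -/
import Mathlib

section
/- Let 0 < α < 1 and n ≥ 1. Let U be the n×n upper triangular matrix with U_{ij} = 1 for i ≤ j and U_{ij} = 0 for i > j, and let W be the n×n diagonal matrix with W_{jj} = (α − α²)·α^{j−1} for 1 ≤ j ≤ n−1 and W_{nn} = (α − α²)·α^{n−1}/(1 − α) = α^n. Then K = U W Uᵀ. -/
/-!
Conjugating a diagonal matrix `D` by the all-ones upper triangular matrix `U` gives
`(U D Uᵀ) i j = ∑_{k ≥ max i j} D k k`. The weights of `W` are the successive differences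
`g k - g (k + 1)` of `g k = α ^ (k + 1)` truncated to `0` at `k = n`, so these tail sums telescope
to `g (max i j) = α ^ (max i j + 1)`.
-/

open Matrix

open Finset

section UpperOnes

variable {R : Type*} {n : ℕ}

def upperOnes [Zero R] [One R] (n : ℕ) : Matrix (Fin n) (Fin n) R :=
  of fun i j => if i ≤ j then 1 else 0

theorem upperOnes_mul_diagonal_mul_transpose_apply [NonAssocSemiring R] (d : Fin n → R)
    (i j : Fin n) :
    (upperOnes n * diagonal d * (upperOnes n)ᵀ : Matrix (Fin n) (Fin n) R) i j =
      ∑ k ∈ Ici (max i j), d k := by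
  rw [mul_apply, ← filter_le_eq_Ici, sum_filter]
  refine sum_congr rfl fun k _ => ?_
  simp only [mul_diagonal, transpose_apply, upperOnes, of_apply, max_le_iff]
  split_ifs <;> simp_all

theorem sum_Ici_sub_succ [AddCommGroup R] {g : ℕ → R} (hg : g n = 0) (m : Fin n) :
    ∑ k ∈ Ici m, (g k - g (k + 1)) = g m := by
  have telescope := sum_Ico_sub g m.is_lt.le
  rw [← Fin.map_valEmbedding_Ici, sum_map] at telescope
  simp only [Fin.valEmbedding_apply, hg, zero_sub] at telescope
  rw [← neg_neg (g m), ← telescope, ← sum_neg_distrib]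
  simp only [neg_sub]

end UpperOnes

section TruncPow

variable {n : ℕ}

def truncPow {R : Type*} [MonoidWithZero R] (n : ℕ) (α : R) (k : ℕ) : R :=
  if k < n then α ^ (k + 1) else 0

theorem truncPow_sub_truncPow_succ {𝕜 : Type*} [Field 𝕜] {α : 𝕜} (hα : α ≠ 1) {k : ℕ}
    (hk : k < n) :
    truncPow n α k - truncPow n α (k + 1) =
      if k = n - 1 then (α - α ^ 2) * α ^ (n - 1) / (1 - α) else (α - α ^ 2) * α ^ k := by
  rcases eq_or_ne k (n - 1) with hlast | hlast
  · obtain rfl : n = k + 1 := by omega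
    have h1α : 1 - α ≠ 0 := sub_ne_zero.mpr hα.symm
    simp only [truncPow, hk, lt_irrefl, if_true, if_false, add_tsub_cancel_right]
    field_simp
    ring
  · have hk1 : k + 1 < n := by omega
    simp only [truncPow, hk, hk1, hlast, if_true, if_false]
    ring

end TruncPow

theorem stmt_0_general (n : ℕ) (α : ℝ) (hα1 : α < 1)
    (K U W : Matrix (Fin n) (Fin n) ℝ)
    (hK : ∀ i j : Fin n, K i j = α ^ (max (i : ℕ) (j : ℕ) + 1))
    (hU : ∀ i j : Fin n, U i j = if (i : ℕ) ≤ (j : ℕ) then (1 : ℝ) else 0)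
    (hW : ∀ i j : Fin n, W i j =
      if i = j then
        (if (i : ℕ) = n - 1 then (α - α ^ 2) * α ^ (n - 1) / (1 - α)
         else (α - α ^ 2) * α ^ (i : ℕ))
      else 0) :
    K = U * W * Uᵀ := by
  have hU' : U = upperOnes n := by
    ext i j
    simp only [hU, upperOnes, of_apply, Fin.le_def]
  have hW' : W = diagonal fun k : Fin n => truncPow n α k - truncPow n α (k + 1) := by
    ext i j
    rw [hW, diagonal_apply]
    by_cases hij : i = j
    · rw [if_pos hij, if_pos hij, hij, truncPow_sub_truncPow_succ hα1.ne j.is_lt]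
    · rw [if_neg hij, if_neg hij]
  ext i j
  rw [hU', hW', upperOnes_mul_diagonal_mul_transpose_apply, sum_Ici_sub_succ (by simp [truncPow]),
    hK, truncPow, Fin.coe_max, if_pos (max_lt i.is_lt j.is_lt)]

/-- The first-order stable spline (TC) kernel `K` with `K i j = α ^ max(i,j)`
(1-indexed) admits the factorization `K = U W Uᵀ` where `U` is the upper
triangular matrix of all ones and `W` is the indicated diagonal matrix. -/
theorem stmt_0 (n : ℕ) (hn : 1 ≤ n) (α : ℝ) (hα0 : 0 < α) (hα1 : α < 1)
    (K U W : Matrix (Fin n) (Fin n) ℝ)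
    (hK : ∀ i j : Fin n, K i j = α ^ (max (i : ℕ) (j : ℕ) + 1))
    (hU : ∀ i j : Fin n, U i j = if (i : ℕ) ≤ (j : ℕ) then (1 : ℝ) else 0)
    (hW : ∀ i j : Fin n, W i j =
      if i = j then
        (if (i : ℕ) = n - 1 then (α - α ^ 2) * α ^ (n - 1) / (1 - α)
         else (α - α ^ 2) * α ^ (i : ℕ))
      else 0) :
    K = U * W * Uᵀ :=
  stmt_0_general n α hα1 K U W hK hU hW
end

section
/- Let 0 < α < 1 and n ≥ 2. Then K is invertible and K⁻¹ = T, where T is the symmetric tridiagonal n×n matrix with entries T_{11} = 1/(α − α²); T_{ii} = (1/(α − α²))·(α^{2−i} + α^{1−i}) for 2 ≤ i ≤ n−1; T_{nn} = (1/(α − α²))·(α^{2−n} + (1 − α)·α^{1−n}); T_{i,i+1} = T_{i+1,i} = −(1/(α − α²))·α^{1−i} for 1 ≤ i ≤ n−1; and T_{ij} = 0 whenever |i − j| > 1. -/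
/-!
Write `u k = α ^ (k + 1)` for `k < n` and `u n = 0`, so that `K i j = u (max i j)`. Since
`u m = ∑_{m ≤ k < n} (u k - u (k + 1))`, we have `K = U D Uᵀ` with `U` the upper triangular
all-ones matrix and `D = diag (u k - u (k + 1))`; hence `K⁻¹ = (U⁻¹)ᵀ D⁻¹ U⁻¹` is the Laplacian
of the path `0 — 1 — ⋯ — n`, with weight `w k = (u k - u (k + 1))⁻¹` on the edge `k — k + 1`,
grounded at `n`. Concretely, `w k * (u (max k j) - u (max (k + 1) j))` is `1` if `j ≤ k` and `0`
otherwise, and row `i` of the Laplacian applied to column `j` of `K` is the difference of this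
quantity at `k = i` and `k = i - 1`.
-/

section MaxKernel

open Matrix

variable {R : Type*} [CommRing R] {n : ℕ}

def maxKernel (u : ℕ → R) : Matrix (Fin n) (Fin n) R := of fun i j => u (max i j)

/-- The Laplacian of the path `0 — 1 — ⋯ — n` with weight `w k` on the edge `k — k + 1`, with the
row and column of the vertex `n` deleted. -/
def groundedPathLaplacian (w : ℕ → R) : Matrix (Fin n) (Fin n) R := of fun i j =>
  if (i : ℕ) = j then w i + (if (i : ℕ) = 0 then 0 else w (i - 1))
  else if (i : ℕ) + 1 = j ∨ (j : ℕ) + 1 = i then -w (min i j) else 0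

lemma groundedPathLaplacian_apply (w : ℕ → R) (i k : Fin n) :
    groundedPathLaplacian w i k =
      w i * ((if (k : ℕ) = i then 1 else 0) - if (k : ℕ) = i + 1 then 1 else 0) +
        if (i : ℕ) = 0 then 0
        else w (i - 1) * ((if (k : ℕ) = i then 1 else 0) - if (k : ℕ) = i - 1 then 1 else 0) := by
  simp only [groundedPathLaplacian, of_apply]
  split_ifs <;> first | omega | (simp_all; try omega)

lemma sum_ite_val_eq_mul (g : ℕ → R) {m : ℕ} (hg : n ≤ m → g m = 0) :
    ∑ k : Fin n, (if (k : ℕ) = m then 1 else 0) * g k = g m := by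
  by_cases hm : m < n
  · rw [Finset.sum_eq_single ⟨m, hm⟩ (fun k _ hk => by simp [Fin.ext_iff.not.mp hk])
      (by simp)]
    simp
  · rw [hg (not_lt.mp hm)]
    exact Finset.sum_eq_zero fun k _ => by simp [show (k : ℕ) ≠ m by omega]

lemma sum_groundedPathLaplacian_mul (w g : ℕ → R) (hg : g n = 0) (i : Fin n) :
    ∑ k : Fin n, groundedPathLaplacian w i k * g k =
      w i * (g i - g (i + 1)) + if (i : ℕ) = 0 then 0 else w (i - 1) * (g i - g (i - 1)) := by
  have hi := i.is_lt
  have pick (m : ℕ) (hm : m ≤ n) := sum_ite_val_eq_mul (n := n) g (m := m) fun h => by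
    rw [show m = n by omega, hg]
  simp only [groundedPathLaplacian_apply]
  split_ifs with h0
  · simp only [add_zero, mul_assoc, sub_mul, ← Finset.mul_sum, Finset.sum_sub_distrib,
      pick i hi.le, pick (i + 1) hi]
  · simp only [add_mul, mul_assoc, sub_mul, Finset.sum_add_distrib, ← Finset.mul_sum,
      Finset.sum_sub_distrib, pick i hi.le, pick (i + 1) hi, pick (i - 1) (by omega)]

lemma mul_sub_max_eq_ite {u w : ℕ → R} (hw : ∀ k < n, w k * (u k - u (k + 1)) = 1)
    {k : ℕ} (hk : k < n) (j : ℕ) :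
    w k * (u (max k j) - u (max (k + 1) j)) = if j ≤ k then 1 else 0 := by
  split_ifs with h
  · rw [max_eq_left h, max_eq_left (by omega), hw k hk]
  · rw [max_eq_right (by omega), max_eq_right (by omega), sub_self, mul_zero]

theorem groundedPathLaplacian_mul_maxKernel {u w : ℕ → R} (hu : u n = 0)
    (hw : ∀ k < n, w k * (u k - u (k + 1)) = 1) :
    (groundedPathLaplacian w * maxKernel u : Matrix (Fin n) (Fin n) R) = 1 := by
  ext i j
  have hi := i.is_lt
  have hrow := sum_groundedPathLaplacian_mul w (fun k => u (max k j))
    (by rw [max_eq_left j.is_lt.le, hu]) i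
  rw [mul_apply, one_apply]
  simp only [maxKernel, of_apply, hrow]
  rw [mul_sub_max_eq_ite hw hi]
  rcases Nat.eq_zero_or_pos (i : ℕ) with h0 | h0
  · simp only [h0, if_true, add_zero, Fin.ext_iff, nonpos_iff_eq_zero, eq_comm]
  · have hprev := mul_sub_max_eq_ite hw (k := i - 1) (by omega) j
    rw [Nat.sub_add_cancel h0] at hprev
    rw [if_neg h0.ne', ← neg_sub, mul_neg, hprev]
    split_ifs <;> simp_all [Fin.ext_iff] <;> omega

end MaxKernel

section StableSpline

variable {n : ℕ} {α : ℝ}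

noncomputable def tcProfile (n : ℕ) (α : ℝ) (k : ℕ) : ℝ := if k < n then α ^ (k + 1) else 0

noncomputable def tcWeight (n : ℕ) (α : ℝ) (k : ℕ) : ℝ :=
  if k + 1 < n then 1 / (α - α ^ 2) * α ^ (-(k : ℤ)) else α ^ (-(n : ℤ))

noncomputable def tcTridiagonal (n : ℕ) (α : ℝ) : Matrix (Fin n) (Fin n) ℝ := Matrix.of fun i j =>
  if (i : ℕ) = (j : ℕ) then
    (if (i : ℕ) = 0 then 1 / (α - α ^ 2)
     else if (i : ℕ) = n - 1 then
       (1 / (α - α ^ 2)) * (α ^ ((2 : ℤ) - (n : ℤ)) + (1 - α) * α ^ ((1 : ℤ) - (n : ℤ)))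
     else (1 / (α - α ^ 2)) * (α ^ ((1 : ℤ) - ((i : ℕ) : ℤ)) + α ^ (-((i : ℕ) : ℤ))))
  else if (i : ℕ) + 1 = (j : ℕ) ∨ (j : ℕ) + 1 = (i : ℕ) then
    -(1 / (α - α ^ 2)) * α ^ (-((min (i : ℕ) (j : ℕ) : ℕ) : ℤ))
  else 0

lemma self_sub_sq_ne_zero (hα0 : α ≠ 0) (hα1 : α ≠ 1) : α - α ^ 2 ≠ 0 := by
  rw [sq, ← mul_one_sub]
  exact mul_ne_zero hα0 (sub_ne_zero.mpr hα1.symm)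

lemma tcWeight_mul_sub (hα0 : α ≠ 0) (hα1 : α ≠ 1) {k : ℕ} (hk : k < n) :
    tcWeight n α k * (tcProfile n α k - tcProfile n α (k + 1)) = 1 := by
  unfold tcWeight tcProfile
  split_ifs with h
  · rw [zpow_neg, zpow_natCast]
    have hden := self_sub_sq_ne_zero hα0 hα1
    field_simp
    ring
  · rw [show n = k + 1 by omega, zpow_neg, zpow_natCast, sub_zero,
      inv_mul_cancel₀ (pow_ne_zero _ hα0)]

lemma groundedPathLaplacian_tcWeight (hn : 2 ≤ n) (hα0 : α ≠ 0) (hα1 : α ≠ 1) :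
    groundedPathLaplacian (tcWeight n α) = tcTridiagonal n α := by
  ext i j
  have hi := i.is_lt
  simp only [groundedPathLaplacian, tcTridiagonal, Matrix.of_apply]
  have hden := self_sub_sq_ne_zero hα0 hα1
  split_ifs with hij h0 hlast hadj
  · rw [h0, tcWeight, if_pos (by omega), add_zero, Nat.cast_zero, neg_zero, zpow_zero, mul_one]
  · obtain ⟨m, rfl⟩ : ∃ m, n = m + 2 := ⟨n - 2, by omega⟩
    rw [hlast, show m + 2 - 1 - 1 = m by omega, tcWeight, tcWeight, if_neg (by omega),
      if_pos (by omega), show (2 : ℤ) - ((m + 2 : ℕ) : ℤ) = -(m : ℤ) by push_cast; ring,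
      show (1 : ℤ) - ((m + 2 : ℕ) : ℤ) = -((m + 1 : ℕ) : ℤ) by push_cast; ring]
    simp only [zpow_neg, zpow_natCast]
    field_simp
    ring
  · obtain ⟨m, hm⟩ : ∃ m, (i : ℕ) = m + 1 := ⟨i - 1, by omega⟩
    rw [hm, Nat.add_sub_cancel, tcWeight, tcWeight, if_pos (by omega), if_pos (by omega),
      show (1 : ℤ) - ((m + 1 : ℕ) : ℤ) = -(m : ℤ) by push_cast; ring]
    ring
  · rw [tcWeight, if_pos (by omega), neg_mul]
  · rfl

end StableSpline

/-- The first-order stable spline kernel `K` (entries `K_{ij} = α^{max(i,j)}`,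
1-indexed) is invertible and its inverse is the indicated symmetric tridiagonal
matrix `T`. -/
theorem stmt_1 (n : ℕ) (hn : 2 ≤ n) (α : ℝ) (hα0 : 0 < α) (hα1 : α < 1)
    (K T : Matrix (Fin n) (Fin n) ℝ)
    (hK : ∀ i j : Fin n, K i j = α ^ (max (i : ℕ) (j : ℕ) + 1))
    (hT : ∀ i j : Fin n, T i j =
      if (i : ℕ) = (j : ℕ) then
        (if (i : ℕ) = 0 then 1 / (α - α ^ 2)
         else if (i : ℕ) = n - 1 then
           (1 / (α - α ^ 2)) * (α ^ ((2 : ℤ) - (n : ℤ)) + (1 - α) * α ^ ((1 : ℤ) - (n : ℤ)))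
         else (1 / (α - α ^ 2)) * (α ^ ((1 : ℤ) - ((i : ℕ) : ℤ)) + α ^ (-((i : ℕ) : ℤ))))
      else if (i : ℕ) + 1 = (j : ℕ) ∨ (j : ℕ) + 1 = (i : ℕ) then
        -(1 / (α - α ^ 2)) * α ^ (-((min (i : ℕ) (j : ℕ) : ℕ) : ℤ))
      else 0) :
    IsUnit K.det ∧ K⁻¹ = T := by
  have hK' : K = maxKernel (tcProfile n α) := Matrix.ext fun i j => by
    rw [hK, maxKernel, Matrix.of_apply, tcProfile, if_pos (max_lt i.is_lt j.is_lt)]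
  have hT' : T = groundedPathLaplacian (tcWeight n α) := by
    rw [groundedPathLaplacian_tcWeight hn hα0.ne' hα1.ne]
    exact Matrix.ext hT
  have hTK : T * K = 1 := by
    rw [hK', hT']
    exact groundedPathLaplacian_mul_maxKernel (by simp [tcProfile])
      fun k hk => tcWeight_mul_sub hα0.ne' hα1.ne hk
  exact ⟨Matrix.isUnit_det_of_left_inverse hTK, Matrix.inv_eq_left_inv hTK⟩
end

section
/- Let 0 < α < 1 and n ≥ 1. Then det(K) = (1 − α)^{n−1} · α^{n(n+1)/2}. -/
/-!
Subtracting row 1 from row 0 of the matrix `(f (max i j))` leaves `f 0 - f 1` as the only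
nonzero entry of row 0, and the complementary minor is the same kind of matrix for the shifted
sequence `k ↦ f (k + 1)`. Hence `det (f (max i j))_{i,j<m+1} = f m * ∏_{k<m} (f k - f (k + 1))`
over any commutative ring; for `f k = α ^ (k + 1)` the factors are `(1 - α) α ^ (k + 1)`.
-/

open Finset Matrix

def maxMatrix {R : Type*} (f : ℕ → R) (n : ℕ) : Matrix (Fin n) (Fin n) R :=
  Matrix.of fun i j => f (max (i : ℕ) j)

section

variable {R : Type*} [CommRing R]

theorem det_maxMatrix_succ_succ (f : ℕ → R) (m : ℕ) :
    (maxMatrix f (m + 2)).det = (f 0 - f 1) * (maxMatrix (fun k => f (k + 1)) (m + 1)).det := by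
  set A := maxMatrix f (m + 2)
  have hrow : A 0 + (-1 : R) • A 1 = Pi.single 0 (f 0 - f 1) := by
    ext j
    refine Fin.cases ?_ (fun j => ?_) j <;> simp [A, maxMatrix, sub_eq_add_neg]
  rw [← det_updateRow_add_smul_self A (i := 0) (j := 1) Fin.zero_ne_one (-1), hrow,
    det_succ_row_zero, Fin.sum_univ_succ]
  simp only [updateRow_self, Pi.single_eq_same, Fin.val_zero, pow_zero, one_mul,
    Pi.single_eq_of_ne (Fin.succ_ne_zero _), mul_zero, zero_mul, sum_const_zero, add_zero]
  congr 2
  ext i j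
  simp [A, maxMatrix, Fin.succAbove_zero]

theorem det_maxMatrix_succ (f : ℕ → R) (m : ℕ) :
    (maxMatrix f (m + 1)).det = f m * ∏ k ∈ range m, (f k - f (k + 1)) := by
  induction m generalizing f with
  | zero => simp [maxMatrix]
  | succ m ih =>
    rw [det_maxMatrix_succ_succ, ih, prod_range_succ']
    ring

theorem prod_range_pow_sub_pow_succ (α : R) (m : ℕ) :
    ∏ k ∈ range m, (α ^ (k + 1) - α ^ (k + 1 + 1)) =
      (1 - α) ^ m * α ^ (∑ k ∈ range m, (k + 1)) := by
  calc ∏ k ∈ range m, (α ^ (k + 1) - α ^ (k + 1 + 1))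
      _ = ∏ k ∈ range m, (1 - α) * α ^ (k + 1) := prod_congr rfl fun k _ => by ring
      _ = _ := by rw [prod_mul_distrib, prod_const, card_range, prod_pow_eq_pow_sum]

end

theorem sum_range_add_one (n : ℕ) : ∑ k ∈ range n, (k + 1) = n * (n + 1) / 2 := by
  rw [← add_zero (∑ k ∈ range n, (k + 1)), ← sum_range_succ' (fun k => k), sum_range_id,
    Nat.add_sub_cancel, Nat.mul_comm]

theorem stmt_3_general (n : ℕ) (α : ℝ)
    (K : Matrix (Fin n) (Fin n) ℝ)
    (hK : ∀ i j : Fin n, K i j = α ^ (max (i : ℕ) (j : ℕ) + 1)) :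
    K.det = (1 - α) ^ (n - 1) * α ^ (n * (n + 1) / 2) := by
  obtain rfl : K = maxMatrix (fun k => α ^ (k + 1)) n := Matrix.ext hK
  cases n with
  | zero => simp
  | succ m =>
    rw [det_maxMatrix_succ, prod_range_pow_sub_pow_succ, ← sum_range_add_one, sum_range_succ,
      Nat.add_sub_cancel, pow_add]
    ring

/-- The determinant of the first-order stable spline kernel `K`
(entries `K_{ij} = α^{max(i,j)}`, 1-indexed) equals
`(1 − α)^{n−1} · α^{n(n+1)/2}`. -/
theorem stmt_3 (n : ℕ) (hn : 1 ≤ n) (α : ℝ) (hα0 : 0 < α) (hα1 : α < 1)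
    (K : Matrix (Fin n) (Fin n) ℝ)
    (hK : ∀ i j : Fin n, K i j = α ^ (max (i : ℕ) (j : ℕ) + 1)) :
    K.det = (1 - α) ^ (n - 1) * α ^ (n * (n + 1) / 2) :=
  stmt_3_general n α K hK
end

section
/- Let 0 < α < 1 and n ≥ 1, and let M be any n×n real symmetric positive semidefinite matrix satisfying the band constraints M_{ii} = α^{i} for 1 ≤ i ≤ n and M_{i,i+1} = M_{i+1,i} = α^{i+1} for 1 ≤ i ≤ n−1. Then det(M) ≤ det(K). In other words, the first-order stable spline kernel K is the maximum-entropy (maximum-determinant) completion of the partially specified 1-band matrix with band entries σ_{ij} = α^{max(i,j)} for |i − j| ≤ 1. -/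
/-!
Peel off the last index. Congruence by the transvection "last row minus `t` times row `n - 1`"
(and the same on columns) keeps a positive semidefinite `M` semidefinite, keeps its leading
principal block `M'` and its determinant, and turns the last diagonal entry into the quadratic form
`q(t) = M_{nn} - 2t M_{n-1,n} + t² M_{n-1,n-1}`. The Schur complement of `M'` (Fischer's inequality
with a `1 × 1` block) gives `det M ≤ det M' · q(t)`. The band entries alone fix
`q(α) = αⁿ (1 - α)`, and for `K` the same row operation clears the last row, so
`det K = det K' · αⁿ (1 - α)`. Induction on the size finishes the proof.
-/

namespace Matrix

section Fischer

variable {m o : Type*} [Fintype m] [Fintype o] [DecidableEq m] [DecidableEq o]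
  {M : Matrix (m ⊕ o) (m ⊕ o) ℝ}

theorem PosSemidef.det_eq_zero_of_det_toBlocks₁₁_eq_zero (hM : M.PosSemidef)
    (h : M.toBlocks₁₁.det = 0) : M.det = 0 := by
  obtain ⟨x, hx, hAx⟩ := exists_mulVec_eq_zero_iff.mpr h
  have hquad : star (Sum.elim x 0) ⬝ᵥ M *ᵥ Sum.elim x 0 = 0 := by
    rw [← fromBlocks_toBlocks M, fromBlocks_mulVec]
    simp [hAx]
  refine exists_mulVec_eq_zero_iff.mp ⟨Sum.elim x 0, fun h0 => hx ?_,
    (hM.dotProduct_mulVec_zero_iff _).mp hquad⟩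
  ext i
  exact congrFun h0 (Sum.inl i)

theorem PosSemidef.det_le_det_toBlocks₁₁_mul_det_toBlocks₂₂ [Unique o] (hM : M.PosSemidef) :
    M.det ≤ M.toBlocks₁₁.det * M.toBlocks₂₂.det := by
  have hA : M.toBlocks₁₁.PosSemidef := hM.submatrix Sum.inl
  by_cases h : M.toBlocks₁₁.det = 0
  · rw [hM.det_eq_zero_of_det_toBlocks₁₁_eq_zero h, h, zero_mul]
  have : Invertible M.toBlocks₁₁ := invertibleOfIsUnitDet _ (Ne.isUnit h)
  have hB : M.toBlocks₁₂ = M.toBlocks₂₁ᴴ := by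
    ext i j
    exact (hM.1.apply _ _).symm
  have hS : (M.toBlocks₂₁ * ⅟M.toBlocks₁₁ * M.toBlocks₂₁ᴴ).PosSemidef := by
    rw [invOf_eq_nonsing_inv]
    exact (hA.posDef_iff_det_ne_zero.mpr h).inv.posSemidef.mul_mul_conjTranspose_same _
  conv_lhs => rw [← fromBlocks_toBlocks M, det_fromBlocks₁₁, hB]
  rw [det_unique (toBlocks₂₂ M), det_unique (_ - _), sub_apply]
  exact mul_le_mul_of_nonneg_left (sub_le_self _ hS.diag_nonneg) hA.det_nonneg

end Fischer

theorem PosSemidef.det_le_det_submatrix_castSucc_mul {n : ℕ}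
    {M : Matrix (Fin (n + 1)) (Fin (n + 1)) ℝ} (hM : M.PosSemidef) :
    M.det ≤ (M.submatrix Fin.castSucc Fin.castSucc).det * M (Fin.last n) (Fin.last n) := by
  have := (hM.submatrix finSumFinEquiv).det_le_det_toBlocks₁₁_mul_det_toBlocks₂₂
  rwa [det_submatrix_equiv_self, det_unique (toBlocks₂₂ _)] at this

theorem transpose_transvection {n R : Type*} [DecidableEq n] [CommRing R] (i j : n) (c : R) :
    (transvection i j c)ᵀ = transvection j i c := by
  simp [transvection, transpose_add]

theorem PosSemidef.det_le_det_submatrix_castSucc_mul_sub {n : ℕ}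
    {M : Matrix (Fin (n + 1)) (Fin (n + 1)) ℝ} (hM : M.PosSemidef) (i : Fin n) (t : ℝ) :
    M.det ≤ (M.submatrix Fin.castSucc Fin.castSucc).det *
      (M (Fin.last n) (Fin.last n) - t * M i.castSucc (Fin.last n) -
        t * M (Fin.last n) i.castSucc + t ^ 2 * M i.castSucc i.castSucc) := by
  set E := transvection i.castSucc (Fin.last n) (-t)
  have hN : (Eᴴ * M * E).PosSemidef := hM.conjTranspose_mul_mul_same E
  have hdet : (Eᴴ * M * E).det = M.det := by
    simp [E, (Fin.castSucc_lt_last i).ne]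
  have hsub : (Eᴴ * M * E).submatrix Fin.castSucc Fin.castSucc =
      M.submatrix Fin.castSucc Fin.castSucc := by
    ext a b
    simp [E, transpose_transvection, (Fin.castSucc_lt_last _).ne]
  have hlast : (Eᴴ * M * E) (Fin.last n) (Fin.last n) = M (Fin.last n) (Fin.last n) -
      t * M i.castSucc (Fin.last n) - t * M (Fin.last n) i.castSucc +
        t ^ 2 * M i.castSucc i.castSucc := by
    simp only [conjTranspose_eq_transpose_of_trivial, transpose_transvection,
      mul_transvection_apply_same, transvection_mul_apply_same, E]
    ring
  have := hN.det_le_det_submatrix_castSucc_mul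
  rwa [hdet, hsub, hlast] at this

theorem det_eq_det_submatrix_castSucc_mul_of_last_row {R : Type*} [CommRing R] {n : ℕ}
    (M : Matrix (Fin (n + 1)) (Fin (n + 1)) R)
    (h : ∀ j : Fin n, M (Fin.last n) j.castSucc = 0) :
    M.det = (M.submatrix Fin.castSucc Fin.castSucc).det * M (Fin.last n) (Fin.last n) := by
  rw [det_succ_row M (Fin.last n), Fin.sum_univ_castSucc]
  simp only [h, mul_zero, zero_mul, Finset.sum_const_zero, zero_add, Fin.succAbove_last,
    Fin.val_last, Even.neg_one_pow ⟨n, rfl⟩, one_mul]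
  exact mul_comm _ _

/-- Indices start at `0`: entry `(i, j)` is the paper's `K_{i+1, j+1} = α^{max(i,j)+1}`. -/
def tcKernel {R : Type*} [Monoid R] (α : R) (n : ℕ) : Matrix (Fin n) (Fin n) R :=
  of fun i j => α ^ (max (i : ℕ) j + 1)

def EqOnTridiagonal {R : Type*} {n : ℕ} (M N : Matrix (Fin n) (Fin n) R) : Prop :=
  ∀ i j : Fin n, (i : ℕ) ≤ j + 1 → (j : ℕ) ≤ i + 1 → M i j = N i j

theorem EqOnTridiagonal.submatrix_castSucc {R : Type*} {n : ℕ}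
    {M N : Matrix (Fin (n + 1)) (Fin (n + 1)) R} (h : M.EqOnTridiagonal N) :
    (M.submatrix Fin.castSucc Fin.castSucc).EqOnTridiagonal
      (N.submatrix Fin.castSucc Fin.castSucc) :=
  fun i j => h i.castSucc j.castSucc

theorem det_tcKernel_succ_succ {R : Type*} [CommRing R] (α : R) (n : ℕ) :
    (tcKernel α (n + 2)).det = (tcKernel α (n + 1)).det * (α ^ (n + 2) - α ^ (n + 3)) := by
  set E : Matrix (Fin (n + 2)) (Fin (n + 2)) R :=
    transvection (Fin.last (n + 1)) (Fin.last n).castSucc (-α)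
  have hsub : (E * tcKernel α (n + 2)).submatrix Fin.castSucc Fin.castSucc =
      tcKernel α (n + 1) := by
    ext a b
    simp [E, (Fin.castSucc_lt_last _).ne, tcKernel]
  have hrow (j : Fin (n + 1)) : (E * tcKernel α (n + 2)) (Fin.last (n + 1)) j.castSucc = 0 := by
    have hmax : max n (j : ℕ) = n := max_eq_left (Nat.le_of_lt_succ j.isLt)
    simp only [tcKernel, transvection_mul_apply_same, of_apply, Fin.val_last, Fin.val_castSucc,
      Fin.is_le', sup_of_le_left, hmax, neg_mul, E]
    ring
  calc (tcKernel α (n + 2)).det = (E * tcKernel α (n + 2)).det := by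
        simp [E, (Fin.castSucc_lt_last _).ne']
    _ = _ := det_eq_det_submatrix_castSucc_mul_of_last_row _ hrow
    _ = _ := by
      rw [hsub]
      simp only [tcKernel, transvection_mul_apply_same, of_apply, Fin.val_last, max_self,
        Fin.val_castSucc, le_add_iff_nonneg_right, zero_le, sup_of_le_right, neg_mul, E]
      ring

theorem det_le_det_tcKernel {α : ℝ} (hα0 : 0 ≤ α) (hα1 : α ≤ 1) :
    ∀ {n : ℕ} {M : Matrix (Fin n) (Fin n) ℝ}, M.PosSemidef → M.EqOnTridiagonal (tcKernel α n) →
      M.det ≤ (tcKernel α n).det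
  | 0, _, _, _ => by simp
  | 1, M, _, hMK => by
    rw [det_unique, det_unique, hMK default default le_self_add le_self_add]
  | n + 2, M, hM, hMK => by
    have hsub := det_le_det_tcKernel hα0 hα1 (hM.submatrix Fin.castSucc) hMK.submatrix_castSucc
    have hll := hMK (Fin.last (n + 1)) (Fin.last (n + 1)) le_self_add le_self_add
    have hil := hMK (Fin.last n).castSucc (Fin.last (n + 1)) (by grind) (by grind)
    have hli := hMK (Fin.last (n + 1)) (Fin.last n).castSucc (by grind) (by grind)
    have hii := hMK (Fin.last n).castSucc (Fin.last n).castSucc le_self_add le_self_add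
    have hc : 0 ≤ α ^ (n + 2) - α ^ (n + 3) :=
      sub_nonneg.mpr (pow_le_pow_of_le_one hα0 hα1 (by omega))
    calc M.det
        ≤ (M.submatrix Fin.castSucc Fin.castSucc).det * (α ^ (n + 2) - α ^ (n + 3)) := by
          convert hM.det_le_det_submatrix_castSucc_mul_sub (Fin.last n) α using 2
          simp only [hll, hil, hli, hii, tcKernel, of_apply, Fin.val_last, Fin.val_castSucc,
            max_self, le_add_iff_nonneg_right, zero_le, sup_of_le_left, sup_of_le_right]
          ring
      _ ≤ (tcKernel α (n + 1)).det * (α ^ (n + 2) - α ^ (n + 3)) :=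
          mul_le_mul_of_nonneg_right hsub hc
      _ = (tcKernel α (n + 2)).det := (det_tcKernel_succ_succ α n).symm

end Matrix

theorem stmt_5_general (n : ℕ) (α : ℝ) (hα0 : 0 < α) (hα1 : α < 1)
    (K : Matrix (Fin n) (Fin n) ℝ)
    (hK : ∀ i j : Fin n, K i j = α ^ (max (i : ℕ) (j : ℕ) + 1))
    (M : Matrix (Fin n) (Fin n) ℝ) (hM : M.PosSemidef)
    (hdiag : ∀ i : Fin n, M i i = α ^ ((i : ℕ) + 1))
    (hoff : ∀ i j : Fin n, (i : ℕ) + 1 = (j : ℕ) →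
      M i j = α ^ ((j : ℕ) + 1) ∧ M j i = α ^ ((j : ℕ) + 1)) :
    M.det ≤ K.det := by
  obtain rfl : K = Matrix.tcKernel α n := Matrix.ext hK
  refine Matrix.det_le_det_tcKernel hα0.le hα1.le hM fun i j hij hji => ?_
  obtain h | h | h : (i : ℕ) = j ∨ (i : ℕ) + 1 = j ∨ (j : ℕ) + 1 = i := by omega
  · obtain rfl := Fin.ext h
    simp [Matrix.tcKernel, hdiag]
  · simp [Matrix.tcKernel, (hoff i j h).1, ← h]
  · simp [Matrix.tcKernel, (hoff j i h).2, ← h]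

/-- The first-order stable spline kernel `K` (entries `K_{ij} = α^{max(i,j)}`,
1-indexed) is the maximum-determinant (maximum-entropy) completion of the
1-band data `σ_{ij} = α^{max(i,j)}`, `|i − j| ≤ 1`: any symmetric positive
semidefinite matrix `M` with `M_{ii} = α^i` and `M_{i,i+1} = M_{i+1,i} = α^{i+1}`
satisfies `det(M) ≤ det(K)`. -/
theorem stmt_5 (n : ℕ) (hn : 1 ≤ n) (α : ℝ) (hα0 : 0 < α) (hα1 : α < 1)
    (K : Matrix (Fin n) (Fin n) ℝ)
    (hK : ∀ i j : Fin n, K i j = α ^ (max (i : ℕ) (j : ℕ) + 1))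
    (M : Matrix (Fin n) (Fin n) ℝ) (hM : M.PosSemidef)
    (hdiag : ∀ i : Fin n, M i i = α ^ ((i : ℕ) + 1))
    (hoff : ∀ i j : Fin n, (i : ℕ) + 1 = (j : ℕ) →
      M i j = α ^ ((j : ℕ) + 1) ∧ M j i = α ^ ((j : ℕ) + 1)) :
    M.det ≤ K.det :=
  stmt_5_general n α hα0 hα1 K hK M hM hdiag hoff
end

section
/- Let 0 < α < 1 and n ≥ 1, and let M be any n×n real symmetric positive semidefinite matrix satisfying M_{ii} = α^{i} for 1 ≤ i ≤ n and M_{i,i+1} = M_{i+1,i} = α^{i+1} for 1 ≤ i ≤ n−1. If det(M) = det(K), then M = K; that is, K is the unique maximum-determinant completion of the 1-band data σ_{ij} = α^{max(i,j)}, |i − j| ≤ 1. -/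
/-!
Let `U` be the forward-difference matrix (`1` on the diagonal, `-1` on the superdiagonal), which
has determinant `1`. Since `K i j` depends only on `max i j`, `U K Uᵀ` is diagonal, while the
diagonal of `U M Uᵀ` only involves the band entries of `M`, so it agrees with that of `U K Uᵀ`.
Thus `N = U M Uᵀ` is positive semidefinite with `det N = det K = ∏ N i i`: the equality case of
Hadamard's inequality. Rescaled to unit diagonal, `N` has trace `n` and determinant `1`, so its
eigenvalues have arithmetic and geometric mean `1` and all equal `1`. Hence `N` is diagonal,
`U M Uᵀ = U K Uᵀ`, and `M = K`.
-/

open Matrix Finset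
open scoped ComplexOrder

theorem Real.eq_one_of_sum_eq_card_of_prod_eq_one {ι : Type*} [Fintype ι] {μ : ι → ℝ}
    (h0 : ∀ i, 0 ≤ μ i) (hsum : ∑ i, μ i = Fintype.card ι) (hprod : ∏ i, μ i = 1) (i : ι) :
    μ i = 1 := by
  by_contra hi
  have hpos : ∀ j, 0 < μ j := fun j => (h0 j).lt_of_ne' fun hj => by
    simp [prod_eq_zero (mem_univ j) hj] at hprod
  -- `x ≤ exp (x - 1)`, with equality only at `x = 1`
  have hlt : ∏ j, μ j < ∏ j, Real.exp (μ j - 1) :=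
    prod_lt_prod (fun j _ => hpos j)
      (fun j _ => by linarith [Real.add_one_le_exp (μ j - 1)])
      ⟨i, mem_univ i, by linarith [Real.add_one_lt_exp (sub_ne_zero.mpr hi)]⟩
  rw [← Real.exp_sum, sum_sub_distrib, hsum, hprod] at hlt
  simp at hlt

namespace Matrix

variable {ι : Type*} [Fintype ι] [DecidableEq ι]

theorem PosSemidef.eq_one_of_trace_eq_card_of_det_eq_one {𝕜 : Type*} [RCLike 𝕜]
    {C : Matrix ι ι 𝕜} (hC : C.PosSemidef) (htr : C.trace = Fintype.card ι) (hdet : C.det = 1) :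
    C = 1 := by
  have hH := hC.isHermitian
  have hsum : ∑ i, hH.eigenvalues i = Fintype.card ι := by
    have := hH.trace_eq_sum_eigenvalues
    rw [htr] at this
    exact_mod_cast this.symm
  have hprod : ∏ i, hH.eigenvalues i = 1 := by
    have := hH.det_eq_prod_eigenvalues
    rw [hdet] at this
    exact_mod_cast this.symm
  have hev := Real.eq_one_of_sum_eq_card_of_prod_eq_one hC.eigenvalues_nonneg hsum hprod
  rw [hH.spectral_theorem, show RCLike.ofReal ∘ hH.eigenvalues = fun _ => (1 : 𝕜) by
    ext i; simp [hev i], diagonal_one, map_one]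

theorem PosSemidef.eq_diagonal_of_det_eq_prod_diag {N : Matrix ι ι ℝ} (hN : N.PosSemidef)
    (hpos : ∀ i, 0 < N i i) (hdet : N.det = ∏ i, N i i) : N = diagonal N.diag := by
  set s : ι → ℝ := fun i => (√(N i i))⁻¹
  have hs : ∀ i, s i ≠ 0 := fun i => inv_ne_zero (Real.sqrt_pos.mpr (hpos i)).ne'
  have hss : ∀ i, s i * N i i * s i = 1 := fun i => by
    rw [mul_right_comm, ← mul_inv, Real.mul_self_sqrt (hpos i).le, inv_mul_cancel₀ (hpos i).ne']
  set C := diagonal s * N * diagonal s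
  have hCapply : ∀ i j, C i j = s i * N i j * s j := fun i j => by
    simp only [C, mul_diagonal, diagonal_mul]
  have hC : C.PosSemidef := by
    simpa [diagonal_conjTranspose] using hN.mul_mul_conjTranspose_same (diagonal s)
  have hC1 : C = 1 := hC.eq_one_of_trace_eq_card_of_det_eq_one
    (by simp [trace, hCapply, hss])
    (by rw [det_mul, det_mul, det_diagonal, hdet, ← prod_mul_distrib, ← prod_mul_distrib]
        exact prod_eq_one fun i _ => hss i)
  ext i j
  obtain rfl | hij := eq_or_ne i j
  · simp
  · have := congrFun (congrFun hC1 i) j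
    simpa [hCapply, hij, hs] using this

end Matrix

section DifferenceMatrix

variable (R : Type*) [CommRing R] (n : ℕ)

def shiftMatrix : Matrix (Fin n) (Fin n) R :=
  of fun i j => if (j : ℕ) = i + 1 then 1 else 0

def diffMatrix : Matrix (Fin n) (Fin n) R :=
  1 - shiftMatrix R n

variable {R n}

theorem shiftMatrix_mul_apply (P : Matrix (Fin n) (Fin n) R) (i j : Fin n) :
    (shiftMatrix R n * P) i j = if h : (i : ℕ) + 1 < n then P ⟨i + 1, h⟩ j else 0 := by
  simp only [shiftMatrix, mul_apply, of_apply, ite_mul, one_mul, zero_mul]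
  split_ifs with h
  · rw [sum_eq_single (⟨i + 1, h⟩ : Fin n) (fun k _ hk => if_neg fun e => hk (Fin.ext e))
      (by simp), if_pos rfl]
  · exact sum_eq_zero fun k _ => if_neg (by omega)

theorem diffMatrix_mul_apply (P : Matrix (Fin n) (Fin n) R) (i j : Fin n) :
    (diffMatrix R n * P) i j = P i j - if h : (i : ℕ) + 1 < n then P ⟨i + 1, h⟩ j else 0 := by
  rw [diffMatrix, sub_mul, one_mul, Matrix.sub_apply, shiftMatrix_mul_apply]

theorem mul_diffMatrix_transpose_apply (P : Matrix (Fin n) (Fin n) R) (i j : Fin n) :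
    (P * (diffMatrix R n)ᵀ) i j = P i j - if h : (j : ℕ) + 1 < n then P i ⟨j + 1, h⟩ else 0 := by
  rw [← transpose_apply (P * _), transpose_mul, transpose_transpose, diffMatrix_mul_apply]
  rfl

theorem det_diffMatrix : (diffMatrix R n).det = 1 := by
  rw [det_of_isUpperTriangular]
  · exact prod_eq_one fun i _ => by simp [diffMatrix, shiftMatrix]
  · intro i j (hji : j < i)
    simp [diffMatrix, shiftMatrix, hji.ne', show (j : ℕ) ≠ i + 1 by omega]

theorem det_diffMatrix_conj (P : Matrix (Fin n) (Fin n) R) :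
    (diffMatrix R n * P * (diffMatrix R n)ᵀ).det = P.det := by
  simp [det_diffMatrix]

theorem diffMatrix_conj_injective :
    Function.Injective fun P : Matrix (Fin n) (Fin n) R =>
      diffMatrix R n * P * (diffMatrix R n)ᵀ := by
  intro P Q h
  have hU : IsUnit (diffMatrix R n) := (isUnit_iff_isUnit_det _).mpr (by simp [det_diffMatrix])
  have hUt : IsUnit (diffMatrix R n)ᵀ := (isUnit_iff_isUnit_det _).mpr (by simp [det_diffMatrix])
  exact hUt.mul_right_cancel (hU.mul_left_cancel (by simpa only [Matrix.mul_assoc] using h))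

theorem diffMatrix_conj_apply_self_eq_of_band {P Q : Matrix (Fin n) (Fin n) R}
    (hPQ : ∀ i j : Fin n, (i : ℕ) ≤ j + 1 → (j : ℕ) ≤ i + 1 → P i j = Q i j) (i : Fin n) :
    (diffMatrix R n * P * (diffMatrix R n)ᵀ) i i =
      (diffMatrix R n * Q * (diffMatrix R n)ᵀ) i i := by
  simp only [mul_diffMatrix_transpose_apply, diffMatrix_mul_apply]
  split_ifs with h
  · rw [hPQ i i (by omega) (by omega), hPQ i ⟨i + 1, h⟩ (by simp; omega) (by simp),
      hPQ ⟨i + 1, h⟩ i (by simp) (by simp; omega), hPQ ⟨i + 1, h⟩ ⟨i + 1, h⟩ (by simp) (by simp)]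
  · rw [hPQ i i (by omega) (by omega)]

theorem diffMatrix_conj_of_apply_eq_max {K : Matrix (Fin n) (Fin n) R} {f : ℕ → R}
    (hK : ∀ i j : Fin n, K i j = f (max (i : ℕ) j)) :
    diffMatrix R n * K * (diffMatrix R n)ᵀ =
      diagonal fun i : Fin n => f i - if (i : ℕ) + 1 < n then f (i + 1) else 0 := by
  -- rows `i` and `i + 1` of `K` agree to the right of the diagonal
  have hUK : ∀ i j : Fin n, (i : ℕ) < j → (diffMatrix R n * K) i j = 0 := by
    intro i j hij
    rw [diffMatrix_mul_apply, dif_pos (by omega), hK, hK, max_eq_right hij.le,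
      max_eq_right (by simpa using hij), sub_self]
  have habove : ∀ i j : Fin n, (i : ℕ) < j →
      (diffMatrix R n * K * (diffMatrix R n)ᵀ) i j = 0 := by
    intro i j hij
    rw [mul_diffMatrix_transpose_apply, hUK i j hij]
    split_ifs
    · rw [hUK _ _ (by simp; omega), sub_zero]
    · rw [sub_zero]
  have hsymm : (diffMatrix R n * K * (diffMatrix R n)ᵀ)ᵀ =
      diffMatrix R n * K * (diffMatrix R n)ᵀ := by
    have hKt : Kᵀ = K := by ext i j; simp [hK, max_comm]
    rw [transpose_mul, transpose_mul, transpose_transpose, hKt, Matrix.mul_assoc]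
  ext i j
  rcases lt_trichotomy i j with hij | rfl | hji
  · rw [habove i j hij, diagonal_apply_ne _ hij.ne]
  · rw [mul_diffMatrix_transpose_apply, diffMatrix_mul_apply, diagonal_apply_eq]
    split_ifs with h
    · rw [hUK _ _ (by simp), sub_zero, hK, hK, max_self, max_eq_left (by simp)]
    · rw [hK, max_self, sub_zero, sub_zero]
  · rw [← hsymm, transpose_apply, habove j i hji, diagonal_apply_ne _ hji.ne']

end DifferenceMatrix

theorem stmt_6_general (n : ℕ) (α : ℝ) (hα0 : 0 < α) (hα1 : α < 1)
    (K : Matrix (Fin n) (Fin n) ℝ)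
    (hK : ∀ i j : Fin n, K i j = α ^ (max (i : ℕ) (j : ℕ) + 1))
    (M : Matrix (Fin n) (Fin n) ℝ) (hM : M.PosSemidef)
    (hdiag : ∀ i : Fin n, M i i = α ^ ((i : ℕ) + 1))
    (hoff : ∀ i j : Fin n, (i : ℕ) + 1 = (j : ℕ) →
      M i j = α ^ ((j : ℕ) + 1) ∧ M j i = α ^ ((j : ℕ) + 1))
    (hdet : M.det = K.det) :
    M = K := by
  set U := diffMatrix ℝ n
  set d : Fin n → ℝ := fun i =>
    α ^ ((i : ℕ) + 1) - if (i : ℕ) + 1 < n then α ^ ((i : ℕ) + 1 + 1) else 0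
  have hKconj : U * K * Uᵀ = diagonal d :=
    diffMatrix_conj_of_apply_eq_max (f := fun m => α ^ (m + 1)) hK
  have hd : ∀ i, 0 < d i := fun i => by
    simp only [d]
    split_ifs
    · exact sub_pos.mpr (pow_lt_pow_right_of_lt_one₀ hα0 hα1 (by omega))
    · simpa using pow_pos hα0 _
  have hband : ∀ i j : Fin n, (i : ℕ) ≤ j + 1 → (j : ℕ) ≤ i + 1 → M i j = K i j := by
    intro i j hij hji
    rcases (show (i : ℕ) = j ∨ (i : ℕ) + 1 = j ∨ (j : ℕ) + 1 = i by omega) with h | h | h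
    · rw [Fin.ext h, hdiag, hK, max_self]
    · rw [(hoff i j h).1, hK, max_eq_right (by omega)]
    · rw [(hoff j i h).2, hK, max_eq_left (by omega)]
  have hMconj : U * M * Uᵀ = diagonal d := by
    have hMdiag : ∀ i, (U * M * Uᵀ) i i = d i := fun i => by
      rw [diffMatrix_conj_apply_self_eq_of_band hband, hKconj, diagonal_apply_eq]
    have hpsd : (U * M * Uᵀ).PosSemidef := by
      simpa using hM.mul_mul_conjTranspose_same U
    rw [hpsd.eq_diagonal_of_det_eq_prod_diag (fun i => hMdiag i ▸ hd i) ?_]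
    · exact congrArg diagonal (funext hMdiag)
    · rw [det_diffMatrix_conj, hdet, ← det_diffMatrix_conj, hKconj, det_diagonal]
      exact prod_congr rfl fun i _ => (hMdiag i).symm
  exact diffMatrix_conj_injective (hMconj.trans hKconj.symm)

/-- Uniqueness of the maximum-determinant completion: if a symmetric positive
semidefinite matrix `M` agrees with the first-order stable spline kernel `K`
(entries `K_{ij} = α^{max(i,j)}`, 1-indexed) on the 1-band and `det(M) = det(K)`,
then `M = K`. -/
theorem stmt_6 (n : ℕ) (hn : 1 ≤ n) (α : ℝ) (hα0 : 0 < α) (hα1 : α < 1)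
    (K : Matrix (Fin n) (Fin n) ℝ)
    (hK : ∀ i j : Fin n, K i j = α ^ (max (i : ℕ) (j : ℕ) + 1))
    (M : Matrix (Fin n) (Fin n) ℝ) (hM : M.PosSemidef)
    (hdiag : ∀ i : Fin n, M i i = α ^ ((i : ℕ) + 1))
    (hoff : ∀ i j : Fin n, (i : ℕ) + 1 = (j : ℕ) →
      M i j = α ^ ((j : ℕ) + 1) ∧ M j i = α ^ ((j : ℕ) + 1))
    (hdet : M.det = K.det) :
    M = K :=
  stmt_6_general n α hα0 hα1 K hK M hM hdiag hoff hdet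
end

section
/- Let 0 < α < 1 and, for x ∈ ℝ, let S(x) be the 3×3 real symmetric matrix with rows (α, α², x), (α², α², α³), (x, α³, α³). Then for every x ∈ ℝ, det S(x) ≤ det S(α³); that is, the determinant of the completion is maximized by the central completion x° = α³, which matches the (1,3) entry of the first-order stable spline kernel. -/
/-! The determinant is a concave quadratic in the free entry `x`: expanding along the first row gives
`det S(x) = det S(α³) - (α (x - α³))²`. -/

def stableSplineCompletion {R : Type*} [Monoid R] (α x : R) : Matrix (Fin 3) (Fin 3) R :=
  !![α, α ^ 2, x; α ^ 2, α ^ 2, α ^ 3; x, α ^ 3, α ^ 3]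

theorem det_stableSplineCompletion {R : Type*} [CommRing R] (α x : R) :
    (stableSplineCompletion α x).det =
      (stableSplineCompletion α (α ^ 3)).det - (α * (x - α ^ 3)) ^ 2 := by
  simp only [stableSplineCompletion, Matrix.det_fin_three, Matrix.of_apply, Matrix.cons_val',
    Matrix.cons_val_zero, Matrix.cons_val_fin_one, Matrix.cons_val_one, Matrix.cons_val]
  ring

theorem det_stableSplineCompletion_le {R : Type*} [CommRing R] [LinearOrder R] [IsOrderedRing R]
    (α x : R) : (stableSplineCompletion α x).det ≤ (stableSplineCompletion α (α ^ 3)).det := by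
  rw [det_stableSplineCompletion]
  exact sub_le_self _ (sq_nonneg _)

theorem stmt_9_general (α : ℝ)
    (S : ℝ → Matrix (Fin 3) (Fin 3) ℝ)
    (hS : ∀ x : ℝ, S x = !![α, α ^ 2, x; α ^ 2, α ^ 2, α ^ 3; x, α ^ 3, α ^ 3]) :
    ∀ x : ℝ, (S x).det ≤ (S (α ^ 3)).det := by
  obtain rfl : S = stableSplineCompletion α := funext hS
  exact det_stableSplineCompletion_le α

/-- The determinant of the 3×3 one-step completion
`S(x) = [[α, α², x], [α², α², α³], [x, α³, α³]]` is maximized at the central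
completion `x° = α³`, which is the (1,3) entry of the first-order stable
spline kernel. -/
theorem stmt_9 (α : ℝ) (hα0 : 0 < α) (hα1 : α < 1)
    (S : ℝ → Matrix (Fin 3) (Fin 3) ℝ)
    (hS : ∀ x : ℝ, S x = !![α, α ^ 2, x; α ^ 2, α ^ 2, α ^ 3; x, α ^ 3, α ^ 3]) :
    ∀ x : ℝ, (S x).det ≤ (S (α ^ 3)).det :=
  stmt_9_general α S hS
end

section
/- Let n ≥ 1 and 0 ≤ m ≤ n−1 be integers, and let Σ* be an n×n real symmetric positive definite matrix whose inverse is m-banded, i.e. (Σ*⁻¹)_{ij} = 0 whenever |i − j| > m. Then for every n×n real symmetric positive semidefinite matrix M agreeing with Σ* on the band, i.e. M_{ij} = Σ*_{ij} for all i, j with |i − j| ≤ m, one has det(M) ≤ det(Σ*). In other words, a positive definite band extension with m-banded inverse maximizes the determinant over all positive semidefinite extensions of the same m-band data. -/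
/-!
Write `Σ⁻¹ = Bᴴ B`. For any positive semidefinite `M`, the matrix `B M Bᴴ` is positive
semidefinite with determinant `det M / det Σ` and trace `tr (Σ⁻¹ M)`, so AM-GM on its
eigenvalues gives `det M ≤ det Σ · (tr (Σ⁻¹ M) / n) ^ n`. As `Σ⁻¹` vanishes off the band,
`tr (Σ⁻¹ M)` only reads the band entries of `M`, where `M` agrees with `Σ`; hence
`tr (Σ⁻¹ M) = tr (Σ⁻¹ Σ) = n`.
-/

open Matrix Finset
open scoped MatrixOrder

theorem Real.prod_le_sum_div_card_pow {ι : Type*} (s : Finset ι) {z : ι → ℝ}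
    (hz : ∀ i ∈ s, 0 ≤ z i) : ∏ i ∈ s, z i ≤ ((∑ i ∈ s, z i) / #s) ^ #s := by
  rcases s.eq_empty_or_nonempty with rfl | hs
  · simp
  have hc : (#s : ℝ) ≠ 0 := by exact_mod_cast hs.card_ne_zero
  have amgm : ∏ i ∈ s, z i ^ (#s : ℝ)⁻¹ ≤ ∑ i ∈ s, (#s : ℝ)⁻¹ * z i :=
    Real.geom_mean_le_arith_mean_weighted s _ z (fun _ _ => by positivity)
      (by simp [hc]) hz
  calc ∏ i ∈ s, z i = (∏ i ∈ s, z i ^ (#s : ℝ)⁻¹) ^ #s := by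
        rw [← Finset.prod_pow]
        exact Finset.prod_congr rfl fun i hi =>
          (Real.rpow_inv_natCast_pow (hz i hi) hs.card_ne_zero).symm
    _ ≤ (∑ i ∈ s, (#s : ℝ)⁻¹ * z i) ^ #s :=
        pow_le_pow_left₀ (Finset.prod_nonneg fun i hi => by have := hz i hi; positivity) amgm _
    _ = ((∑ i ∈ s, z i) / #s) ^ #s := by rw [← Finset.mul_sum, inv_mul_eq_div]

namespace Matrix

variable {ι : Type*} [Fintype ι]

theorem PosSemidef.det_le_trace_div_card_pow [DecidableEq ι] {A : Matrix ι ι ℝ}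
    (hA : A.PosSemidef) :
    A.det ≤ (A.trace / Fintype.card ι) ^ Fintype.card ι := by
  rw [hA.isHermitian.det_eq_prod_eigenvalues, hA.isHermitian.trace_eq_sum_eigenvalues]
  exact Real.prod_le_sum_div_card_pow univ fun i _ => hA.eigenvalues_nonneg i

theorem trace_mul_congr_of_support {R : Type*} [NonUnitalNonAssocSemiring R]
    {T M S : Matrix ι ι R}
    (h : ∀ i j, T i j ≠ 0 → M j i = S j i) : (T * M).trace = (T * S).trace := by
  simp only [trace, diag, mul_apply]
  refine Finset.sum_congr rfl fun i _ => Finset.sum_congr rfl fun j _ => ?_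
  by_cases hT : T i j = 0
  · simp [hT]
  · rw [h i j hT]

theorem PosDef.det_le_det_mul_trace_inv_mul_div_card_pow [DecidableEq ι] {S M : Matrix ι ι ℝ}
    (hS : S.PosDef) (hM : M.PosSemidef) :
    M.det ≤ S.det * ((S⁻¹ * M).trace / Fintype.card ι) ^ Fintype.card ι := by
  obtain ⟨B, hB⟩ : ∃ B : Matrix ι ι ℝ, S⁻¹ = Bᴴ * B :=
    CStarAlgebra.nonneg_iff_eq_star_mul_self.mp hS.inv.posSemidef.nonneg
  have hdet : S.det * (B * M * Bᴴ).det = M.det := by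
    have : S.det * (Bᴴ * B).det = 1 := by
      rw [← hB, det_nonsing_inv, Ring.inverse_eq_inv', mul_inv_cancel₀ hS.det_pos.ne']
    calc S.det * (B * M * Bᴴ).det = S.det * (Bᴴ * B).det * M.det := by
          simp only [det_mul]; ring
      _ = M.det := by rw [this, one_mul]
  have htr : (B * M * Bᴴ).trace = (S⁻¹ * M).trace := by
    rw [trace_mul_comm, ← Matrix.mul_assoc, hB]
  calc M.det = S.det * (B * M * Bᴴ).det := hdet.symm
    _ ≤ S.det * ((S⁻¹ * M).trace / Fintype.card ι) ^ Fintype.card ι := by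
        rw [← htr]
        exact mul_le_mul_of_nonneg_left (hM.mul_mul_conjTranspose_same B).det_le_trace_div_card_pow
          hS.det_pos.le

end Matrix

theorem stmt_11_general (n m : ℕ)
    (Sig : Matrix (Fin n) (Fin n) ℝ) (hSig : Sig.PosDef)
    (hbandinv : ∀ i j : Fin n, ((i : ℕ) + m < (j : ℕ) ∨ (j : ℕ) + m < (i : ℕ)) →
      Sig⁻¹ i j = 0)
    (M : Matrix (Fin n) (Fin n) ℝ) (hM : M.PosSemidef)
    (hband : ∀ i j : Fin n, ((i : ℕ) ≤ (j : ℕ) + m ∧ (j : ℕ) ≤ (i : ℕ) + m) →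
      M i j = Sig i j) :
    M.det ≤ Sig.det := by
  have hsupport : ∀ i j, Sig⁻¹ i j ≠ 0 → M j i = Sig j i := fun i j hij =>
    hband j i (by by_contra hout; exact hij (hbandinv i j (by omega)))
  have htr : (Sig⁻¹ * M).trace = n := by
    rw [trace_mul_congr_of_support hsupport, nonsing_inv_mul _ hSig.det_pos.ne'.isUnit,
      trace_one, Fintype.card_fin]
  have key := hSig.det_le_det_mul_trace_inv_mul_div_card_pow hM
  rcases eq_or_ne n 0 with rfl | hn
  · simp
  · rwa [htr, Fintype.card_fin, div_self (Nat.cast_ne_zero.mpr hn), one_pow, mul_one] at key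

/-- A positive definite band extension whose inverse is `m`-banded maximizes the
determinant over all positive semidefinite extensions of the same `m`-band
data. -/
theorem stmt_11 (n m : ℕ) (hn : 1 ≤ n) (hm : m ≤ n - 1)
    (Sig : Matrix (Fin n) (Fin n) ℝ) (hSig : Sig.PosDef)
    (hbandinv : ∀ i j : Fin n, ((i : ℕ) + m < (j : ℕ) ∨ (j : ℕ) + m < (i : ℕ)) →
      Sig⁻¹ i j = 0)
    (M : Matrix (Fin n) (Fin n) ℝ) (hM : M.PosSemidef)
    (hband : ∀ i j : Fin n, ((i : ℕ) ≤ (j : ℕ) + m ∧ (j : ℕ) ≤ (i : ℕ) + m) →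
      M i j = Sig i j) :
    M.det ≤ Sig.det :=
  stmt_11_general n m Sig hSig hbandinv M hM hband
end

section
/- Let n ≥ 1 and 0 ≤ m ≤ n−1 be integers, and let σ_{ij} = σ_{ji} be given real numbers for all pairs (i,j) with 1 ≤ i, j ≤ n and |i − j| ≤ m. Then there exists an n×n real symmetric positive definite matrix M with M_{ij} = σ_{ij} for all |i − j| ≤ m if and only if for every i = 1, …, n − m the (m+1)×(m+1) matrix [σ_{kl}]_{k,l = i, …, i+m} is positive definite. -/
/-!
Necessity holds because every window `[σ_kl]_{k,l=i..i+m}` is a principal submatrix of the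
extension. Sufficiency is proved one row and column at a time. Let `M` be a positive definite
completion of the leading block and `X` the (positive definite) data on the last indices, whose
upper-left block `A` equals the restriction of `M` to the overlap `g`. If `B` is the new column of
`X`, the column `C = M_{·g} A⁻¹ B` restricts to `B` on `g` and satisfies
`Cᴴ M⁻¹ C = Bᴴ A⁻¹ B`, so the glued matrix `[[M, C], [Cᴴ, D]]` has the same Schur complement as
`X` and is positive definite.
-/

open scoped ComplexOrder

namespace Matrix

variable {𝕜 ι κ ν : Type*} [RCLike 𝕜] [Fintype ι] [Fintype κ] [Fintype ν]

theorem submatrix_id_mul {α l m n : Type*} [NonUnitalNonAssocSemiring α]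
    (M : Matrix m ι α) (N : Matrix ι n α) (e : l → m) :
    (M * N).submatrix e id = M.submatrix e id * N := by
  rw [submatrix_mul M N e id id Function.bijective_id, submatrix_id_id]

theorem posDef_iff_posSemidef_and_det_ne_zero [DecidableEq ι] {A : Matrix ι ι 𝕜} :
    A.PosDef ↔ A.PosSemidef ∧ A.det ≠ 0 :=
  ⟨fun h => ⟨h.posSemidef, h.posSemidef.posDef_iff_det_ne_zero.1 h⟩,
    fun h => h.1.posDef_iff_det_ne_zero.2 h.2⟩

theorem PosDef.posDef_fromBlocks₁₁_iff [DecidableEq κ] [DecidableEq ν] {A : Matrix κ κ 𝕜}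
    (hA : A.PosDef) (B : Matrix κ ν 𝕜) (D : Matrix ν ν 𝕜) :
    (fromBlocks A B Bᴴ D).PosDef ↔ (D - Bᴴ * A⁻¹ * B).PosDef := by
  let := hA.isUnit.invertible
  rw [posDef_iff_posSemidef_and_det_ne_zero, posDef_iff_posSemidef_and_det_ne_zero,
    PosDef.fromBlocks₁₁ B D hA, det_fromBlocks₁₁, invOf_eq_nonsing_inv,
    mul_ne_zero_iff, and_iff_right hA.det_pos.ne']

theorem PosDef.exists_glue [DecidableEq ι] [DecidableEq κ] [DecidableEq ν]
    {M : Matrix ι ι 𝕜} (hM : M.PosDef) (g : κ → ι)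
    {X : Matrix (κ ⊕ ν) (κ ⊕ ν) 𝕜} (hX : X.PosDef) (hXM : X.toBlocks₁₁ = M.submatrix g g) :
    ∃ N : Matrix (ι ⊕ ν) (ι ⊕ ν) 𝕜, N.PosDef ∧ N.toBlocks₁₁ = M ∧
      N.submatrix (Sum.map g id) (Sum.map g id) = X := by
  set A := M.submatrix g g
  set B := X.toBlocks₁₂
  set D := X.toBlocks₂₂
  have hX_eq : X = fromBlocks A B Bᴴ D := by
    have hherm := hX.isHermitian
    rw [← fromBlocks_toBlocks X, isHermitian_fromBlocks_iff] at hherm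
    rw [← hXM, hherm.2.1]
    exact (fromBlocks_toBlocks X).symm
  have hA : A.PosDef := hXM ▸ hX.submatrix Sum.inl_injective
  have hAA : A * A⁻¹ = 1 := mul_nonsing_inv A (isUnit_iff_ne_zero.2 hA.det_pos.ne')
  have hMM : M * M⁻¹ = 1 := mul_nonsing_inv M (isUnit_iff_ne_zero.2 hM.det_pos.ne')
  set C := M.submatrix id g * A⁻¹ * B
  have hCB : C.submatrix g id = B := by
    rw [submatrix_id_mul, submatrix_id_mul, submatrix_submatrix]
    change A * A⁻¹ * B = B
    rw [hAA, Matrix.one_mul]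
  have hMgM : M.submatrix g id * M⁻¹ * M.submatrix id g = A := by
    rw [← submatrix_id_mul, hMM, ← submatrix_id_mul, Matrix.one_mul, submatrix_submatrix]
    rfl
  have hCMC : Cᴴ * M⁻¹ * C = Bᴴ * A⁻¹ * B := by
    have hAh : A⁻¹ᴴ = A⁻¹ := by rw [conjTranspose_nonsing_inv, hA.isHermitian.eq]
    have hMh : (M.submatrix id g)ᴴ = M.submatrix g id := by
      rw [conjTranspose_submatrix, hM.isHermitian.eq]
    calc Cᴴ * M⁻¹ * C = Bᴴ * A⁻¹ * (M.submatrix g id * M⁻¹ * M.submatrix id g) * A⁻¹ * B := by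
          simp only [C, conjTranspose_mul, hAh, hMh, Matrix.mul_assoc]
      _ = Bᴴ * A⁻¹ * B := by
          rw [hMgM, Matrix.mul_assoc (Bᴴ * A⁻¹), Matrix.mul_assoc, hAA, Matrix.one_mul]
  refine ⟨fromBlocks M C Cᴴ D, ?_, toBlocks_fromBlocks₁₁ .., ?_⟩
  · rw [hM.posDef_fromBlocks₁₁_iff, hCMC, ← hA.posDef_fromBlocks₁₁_iff, ← hX_eq]
    exact hX
  · rw [hX_eq, ← hCB]
    ext (i | i) (j | j) <;> simp [conjTranspose_apply, A]

end Matrix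

def Fin.window {n : ℕ} (i l : ℕ) (h : i + l < n) (t : Fin (l + 1)) : Fin n :=
  ⟨i + t, by omega⟩

theorem Fin.window_injective {n i l : ℕ} (h : i + l < n) : Function.Injective (window i l h) :=
  fun s t hst => Fin.ext (by simpa [window] using congrArg Fin.val hst)

namespace Matrix

def EqOnBand {α : Type*} {n : ℕ} (m : ℕ) (M N : Matrix (Fin n) (Fin n) α) : Prop :=
  ∀ i j : Fin n, (i : ℕ) ≤ j + m → (j : ℕ) ≤ i + m → M i j = N i j

variable {𝕜 : Type*} [RCLike 𝕜]

theorem exists_posDef_eqOnBand_succ {m n : ℕ} {σ : Matrix (Fin (n + 1)) (Fin (n + 1)) 𝕜}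
    (hσ : ∀ i l (h : i + l < n + 1), l ≤ m →
      (σ.submatrix (Fin.window i l h) (Fin.window i l h)).PosDef)
    {M : Matrix (Fin n) (Fin n) 𝕜} (hM : M.PosDef)
    (hMσ : EqOnBand m M (σ.submatrix Fin.castSucc Fin.castSucc)) :
    ∃ M' : Matrix (Fin (n + 1)) (Fin (n + 1)) 𝕜, M'.PosDef ∧ EqOnBand m M' σ := by
  set w := min n m
  let g : Fin w → Fin n := fun t => ⟨n - w + t, by omega⟩
  -- `e` enumerates `n - w, …, n`; a band pair not inside `Fin n` lies among these indices.
  let e : Fin w ⊕ Fin 1 → Fin (n + 1) := finSumFinEquiv ∘ Sum.map g id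
  have he : e = Fin.window (n - w) w (by omega) ∘ finSumFinEquiv := by
    funext a
    rcases a with t | t <;> ext <;> simp [e, g, Fin.window]; omega
  have hX : (σ.submatrix e e).PosDef := by
    rw [he, ← submatrix_submatrix]
    exact (hσ _ _ _ (min_le_right n m)).submatrix finSumFinEquiv.injective
  have hXM : (σ.submatrix e e).toBlocks₁₁ = M.submatrix g g := by
    ext s t
    exact (hMσ (g s) (g t) (by simp [g]; omega) (by simp [g]; omega)).symm
  obtain ⟨N, hN, hNM, hNX⟩ := hM.exists_glue g hX hXM
  refine ⟨N.submatrix finSumFinEquiv.symm finSumFinEquiv.symm,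
    hN.submatrix finSumFinEquiv.symm.injective, ?_⟩
  have hrange : ∀ k : Fin (n + 1), n - w ≤ k → ∃ a, e a = k := by
    intro k hk
    obtain ⟨a, ha⟩ := finSumFinEquiv.surjective (⟨k - (n - w), by omega⟩ : Fin (w + 1))
    exact ⟨a, by rw [he, Function.comp_apply, ha]; ext; simp [Fin.window]; omega⟩
  intro i j hij hji
  by_cases hin : (i : ℕ) < n ∧ (j : ℕ) < n
  · obtain ⟨i, rfl⟩ : ∃ i' : Fin n, i'.castSucc = i := ⟨⟨i, hin.1⟩, rfl⟩
    obtain ⟨j, rfl⟩ : ∃ j' : Fin n, j'.castSucc = j := ⟨⟨j, hin.2⟩, rfl⟩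
    simpa [← hNM, toBlocks₁₁] using hMσ i j hij hji
  · obtain ⟨a, rfl⟩ := hrange i (by omega)
    obtain ⟨b, rfl⟩ := hrange j (by omega)
    simpa [e] using congrFun₂ hNX a b

theorem exists_posDef_eqOnBand (m : ℕ) {n : ℕ} (σ : Matrix (Fin n) (Fin n) 𝕜)
    (hσ : ∀ i l (h : i + l < n), l ≤ m →
      (σ.submatrix (Fin.window i l h) (Fin.window i l h)).PosDef) :
    ∃ M : Matrix (Fin n) (Fin n) 𝕜, M.PosDef ∧ EqOnBand m M σ := by
  induction n with
  | zero => exact ⟨1, .one, fun i => i.elim0⟩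
  | succ n ih =>
    obtain ⟨M, hM, hMσ⟩ := ih (σ.submatrix Fin.castSucc Fin.castSucc) fun i l h hl => by
      rw [submatrix_submatrix]
      exact hσ i l (by omega) hl
    exact exists_posDef_eqOnBand_succ hσ hM hMσ

theorem posDef_window_of_le {m n : ℕ} (hmn : m < n) {σ : Matrix (Fin n) (Fin n) 𝕜}
    (hσ : ∀ i (h : i + m < n), (σ.submatrix (Fin.window i m h) (Fin.window i m h)).PosDef)
    {i l : ℕ} (h : i + l < n) (hl : l ≤ m) :
    (σ.submatrix (Fin.window i l h) (Fin.window i l h)).PosDef := by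
  set i' := min i (n - 1 - m)
  have hw : Fin.window i l h = Fin.window i' m (by omega) ∘ Fin.window (i - i') l (by omega) := by
    funext t
    ext
    simp only [Fin.window, Function.comp_apply]
    omega
  rw [hw, ← submatrix_submatrix]
  exact (hσ i' _).submatrix (Fin.window_injective _)

end Matrix

/-- Feasibility of the band extension problem: symmetric `m`-band data `σ`
admits a symmetric positive definite extension if and only if all of its
`(m+1) × (m+1)` principal band submatrices are positive definite. -/
theorem stmt_12 (n m : ℕ) (hm : m ≤ n - 1)
    (σ : Fin n → Fin n → ℝ) :
    (∃ M : Matrix (Fin n) (Fin n) ℝ, M.PosDef ∧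
      ∀ i j : Fin n, ((i : ℕ) ≤ (j : ℕ) + m ∧ (j : ℕ) ≤ (i : ℕ) + m) →
        M i j = σ i j) ↔
    (∀ i : ℕ, ∀ h : i + m < n,
      Matrix.PosDef (Matrix.of (fun k l : Fin (m + 1) =>
        σ ⟨i + (k : ℕ), by have := k.isLt; omega⟩
          ⟨i + (l : ℕ), by have := l.isLt; omega⟩))) := by
  constructor
  · rintro ⟨M, hM, hMσ⟩ i h
    have hwindow : Matrix.of (fun k l => σ (Fin.window i m h k) (Fin.window i m h l)) =
        M.submatrix (Fin.window i m h) (Fin.window i m h) := by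
      ext k l
      exact (hMσ _ _ ⟨by simp [Fin.window]; omega, by simp [Fin.window]; omega⟩).symm
    exact hwindow ▸ hM.submatrix (Fin.window_injective h)
  · intro H
    obtain ⟨M, hM, hMσ⟩ := Matrix.exists_posDef_eqOnBand m σ fun i l h hl =>
      Matrix.posDef_window_of_le (by omega) (fun i h => H i h) h hl
    exact ⟨M, hM, fun i j hij => hMσ i j hij.1 hij.2⟩
end

section
/- Let n ≥ 1 and 0 ≤ m ≤ n−1 be integers, let σ_{ij} = σ_{ji} (for |i − j| ≤ m) be given real m-band data, and let Σ* be an n×n real symmetric positive definite matrix with Σ*_{ij} = σ_{ij} for all |i − j| ≤ m. If det(Σ*) ≥ det(M) for every n×n real symmetric positive definite matrix M with M_{ij} = σ_{ij} for all |i − j| ≤ m, then the inverse of Σ* is m-banded: (Σ*⁻¹)_{ij} = 0 whenever |i − j| > m. -/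
/-!
If `(S⁻¹) i j = b ≠ 0` for some `(i, j)` outside the band, perturb the entries `(i, j)` and
`(j, i)` of `S` by `t`. The matrix determinant lemma gives
`det (S + t (E_ij + E_ji)) = det S * (1 + 2 t b + t² (b² - (S⁻¹) i i (S⁻¹) j j))`, which exceeds
`det S` for small `t` of the sign of `b`, while a Cauchy–Schwarz bound
`x_k² ≤ (xᵀ S x) (S⁻¹) k k` shows the perturbed matrix stays positive definite. It agrees with `S`
on the band, contradicting maximality.
-/

open Matrix

namespace Matrix

variable {ι : Type*} [Fintype ι] [DecidableEq ι]

theorem det_add_single_add_single {R : Type*} [CommRing R] {S : Matrix ι ι R}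
    (hS : IsUnit S.det) (i j : ι) (t : R) :
    (S + single i j t + single j i t).det =
      S.det * ((1 + t * S⁻¹ j i) * (1 + t * S⁻¹ i j) - t ^ 2 * S⁻¹ i i * S⁻¹ j j) := by
  let U : Matrix ι (Fin 2) R :=
    of fun a => ![(Pi.single i t : ι → R) a, (Pi.single j t : ι → R) a]
  let V : Matrix (Fin 2) ι R := of ![Pi.single j (1 : R), Pi.single i (1 : R)]
  have hUV : single i j t + single j i t = U * V := by
    ext a b
    simp only [U, V, add_apply, mul_apply, Fin.sum_univ_two, single, of_apply, Pi.single_apply,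
      cons_val_zero, cons_val_one]
    grind
  have hVU : 1 + V * S⁻¹ * U = !![1 + t * S⁻¹ j i, t * S⁻¹ j j; t * S⁻¹ i i, 1 + t * S⁻¹ i j] := by
    ext l l'
    simp only [add_apply, mul_apply, U, V, of_apply]
    fin_cases l <;> fin_cases l' <;> simp [Pi.single_apply, mul_comm]
  rw [add_assoc, hUV, det_add_mul U V hS, hVU, det_fin_two_of]
  ring

theorem dotProduct_single_add_single_mulVec {R : Type*} [CommRing R] (x : ι → R) (i j : ι)
    (t : R) :
    x ⬝ᵥ (single i j t + single j i t) *ᵥ x = 2 * t * (x i * x j) := by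
  simp only [add_mulVec, single_mulVec, dotProduct_add]
  simp only [dotProduct, Function.update_apply, Pi.zero_apply, mul_ite, mul_zero,
    Finset.sum_ite_eq', Finset.mem_univ, ↓reduceIte]
  ring

theorem PosDef.sq_dotProduct_le {S : Matrix ι ι ℝ} (hS : S.PosDef) (u x : ι → ℝ) :
    (u ⬝ᵥ x) ^ 2 ≤ (x ⬝ᵥ S *ᵥ x) * (u ⬝ᵥ S⁻¹ *ᵥ u) := by
  set y := S⁻¹ *ᵥ u
  have hSy : S *ᵥ y = u := by
    rw [mulVec_mulVec, mul_nonsing_inv _ (isUnit_iff_ne_zero.2 hS.det_pos.ne'), one_mulVec]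
  have hSt : Sᵀ = S := hS.isHermitian.eq
  have hquad : ∀ c : ℝ, 0 ≤ (u ⬝ᵥ y) * (c * c) + (-2 * (u ⬝ᵥ x)) * c + x ⬝ᵥ S *ᵥ x := by
    intro c
    have h := hS.posSemidef.dotProduct_mulVec_nonneg (x - c • y)
    rw [star_trivial] at h
    have hyx : y ⬝ᵥ S *ᵥ x = u ⬝ᵥ x := by
      rw [dotProduct_mulVec, ← mulVec_transpose, hSt, hSy]
    simp only [mulVec_sub, mulVec_smul, hSy, sub_dotProduct, dotProduct_sub, smul_dotProduct,
      dotProduct_smul, hyx, smul_eq_mul] at h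
    rw [dotProduct_comm x u, dotProduct_comm y u] at h
    linarith
  have := discrim_le_zero hquad
  rw [discrim] at this
  nlinarith

theorem PosDef.add_single_add_single {S : Matrix ι ι ℝ} (hS : S.PosDef) {i j : ι} {t : ℝ}
    (ht : |t| * (S⁻¹ i i + S⁻¹ j j) < 1) : (S + single i j t + single j i t).PosDef := by
  have hE : (single i j t + single j i t).IsHermitian := by
    simp [IsHermitian, add_comm]
  rw [add_assoc]
  refine .of_dotProduct_mulVec_pos (hS.isHermitian.add hE) fun x hx => ?_
  have hQ : 0 < x ⬝ᵥ S *ᵥ x := by simpa using hS.dotProduct_mulVec_pos hx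
  have hxk : ∀ k, x k ^ 2 ≤ (x ⬝ᵥ S *ᵥ x) * S⁻¹ k k := fun k => by
    simpa [mulVec_single, dotProduct_single] using hS.sq_dotProduct_le (Pi.single k 1) x
  have hxij : |2 * t * (x i * x j)| ≤ |t| * (x i ^ 2 + x j ^ 2) := by
    rw [abs_mul, abs_mul, abs_two, abs_mul, mul_comm 2, mul_assoc]
    gcongr
    simpa only [sq_abs, mul_assoc] using two_mul_le_add_sq |x i| |x j|
  have hK : x i ^ 2 + x j ^ 2 ≤ (x ⬝ᵥ S *ᵥ x) * (S⁻¹ i i + S⁻¹ j j) := by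
    linarith [hxk i, hxk j]
  calc 0 < (x ⬝ᵥ S *ᵥ x) * (1 - |t| * (S⁻¹ i i + S⁻¹ j j)) := mul_pos hQ (by linarith)
    _ = (x ⬝ᵥ S *ᵥ x) - |t| * ((x ⬝ᵥ S *ᵥ x) * (S⁻¹ i i + S⁻¹ j j)) := by ring
    _ ≤ (x ⬝ᵥ S *ᵥ x) - |2 * t * (x i * x j)| := by
      linarith [mul_le_mul_of_nonneg_left hK (abs_nonneg t)]
    _ ≤ star x ⬝ᵥ (S + (single i j t + single j i t)) *ᵥ x := by
      rw [star_trivial, add_mulVec, dotProduct_add, dotProduct_single_add_single_mulVec]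
      linarith [neg_abs_le (2 * t * (x i * x j))]

theorem PosDef.inv_apply_eq_zero_of_det_le {S : Matrix ι ι ℝ} (hS : S.PosDef) (i j : ι)
    (hmax : ∀ t : ℝ, (S + single i j t + single j i t).PosDef →
      (S + single i j t + single j i t).det ≤ S.det) :
    S⁻¹ i j = 0 := by
  by_contra hb
  set b := S⁻¹ i j
  set K := S⁻¹ i i + S⁻¹ j j
  set γ := b ^ 2 - S⁻¹ i i * S⁻¹ j j with hγ
  have hbK : 0 ≤ |b| * K :=
    mul_nonneg (abs_nonneg b) (add_pos (hS.inv.diag_pos (i := i)) (hS.inv.diag_pos (i := j))).le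
  have hD : 0 < |b| * K + |γ| + 1 := by linarith [abs_nonneg γ]
  -- `s` is small enough that `S + s b (E_ij + E_ji)` stays positive definite (`hsb`) and the
  -- determinant factor `1 + s b² (2 + s γ)` exceeds `1` (`hsγ`).
  set s := (|b| * K + |γ| + 1)⁻¹
  have hs : 0 < s := inv_pos.2 hD
  have hsb : s * (|b| * K) < 1 := by
    rw [inv_mul_lt_one₀ hD]; linarith [abs_nonneg γ]
  have hsγ : s * |γ| < 1 := by
    rw [inv_mul_lt_one₀ hD]; linarith
  have hji : S⁻¹ j i = b := hS.inv.isHermitian.apply i j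
  have h := hmax (s * b) (hS.add_single_add_single (by rw [abs_mul, abs_of_pos hs]; linarith))
  rw [det_add_single_add_single (isUnit_iff_ne_zero.2 hS.det_pos.ne'), hji] at h
  have hgain : 0 < s * b ^ 2 * (2 + s * γ) := by
    have := neg_abs_le γ
    have : 0 < 2 + s * γ := by nlinarith
    positivity
  have : (1 + s * b * b) * (1 + s * b * b) - (s * b) ^ 2 * S⁻¹ i i * S⁻¹ j j
      = 1 + s * b ^ 2 * (2 + s * γ) := by rw [hγ]; ring
  nlinarith [hS.det_pos]

end Matrix

theorem stmt_13_general (n m : ℕ)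
    (σ : Fin n → Fin n → ℝ)
    (Sig : Matrix (Fin n) (Fin n) ℝ) (hSig : Sig.PosDef)
    (hband : ∀ i j : Fin n, ((i : ℕ) ≤ (j : ℕ) + m ∧ (j : ℕ) ≤ (i : ℕ) + m) →
      Sig i j = σ i j)
    (hmax : ∀ M : Matrix (Fin n) (Fin n) ℝ, M.PosDef →
      (∀ i j : Fin n, ((i : ℕ) ≤ (j : ℕ) + m ∧ (j : ℕ) ≤ (i : ℕ) + m) →
        M i j = σ i j) →
      M.det ≤ Sig.det) :
    ∀ i j : Fin n, ((i : ℕ) + m < (j : ℕ) ∨ (j : ℕ) + m < (i : ℕ)) →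
      Sig⁻¹ i j = 0 := by
  intro i j hij
  refine hSig.inv_apply_eq_zero_of_det_le i j fun t hM => hmax _ hM fun a b hab => ?_
  rw [Matrix.add_apply, Matrix.add_apply, single_apply_of_ne, single_apply_of_ne, add_zero,
    add_zero, hband a b hab]
  all_goals rintro ⟨rfl, rfl⟩; omega

/-- If a symmetric positive definite extension `Σ*` of given `m`-band data `σ`
has maximal determinant among all symmetric positive definite extensions of
`σ`, then its inverse is `m`-banded. -/
theorem stmt_13 (n m : ℕ) (hn : 1 ≤ n) (hm : m ≤ n - 1)
    (σ : Fin n → Fin n → ℝ)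
    (hσ : ∀ i j : Fin n, ((i : ℕ) ≤ (j : ℕ) + m ∧ (j : ℕ) ≤ (i : ℕ) + m) →
      σ i j = σ j i)
    (Sig : Matrix (Fin n) (Fin n) ℝ) (hSig : Sig.PosDef)
    (hband : ∀ i j : Fin n, ((i : ℕ) ≤ (j : ℕ) + m ∧ (j : ℕ) ≤ (i : ℕ) + m) →
      Sig i j = σ i j)
    (hmax : ∀ M : Matrix (Fin n) (Fin n) ℝ, M.PosDef →
      (∀ i j : Fin n, ((i : ℕ) ≤ (j : ℕ) + m ∧ (j : ℕ) ≤ (i : ℕ) + m) →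
        M i j = σ i j) →
      M.det ≤ Sig.det) :
    ∀ i j : Fin n, ((i : ℕ) + m < (j : ℕ) ∨ (j : ℕ) + m < (i : ℕ)) →
      Sig⁻¹ i j = 0 :=
  stmt_13_general n m σ Sig hSig hband hmax
end

section
/- Let n ≥ 3 and let σ_{ij} = σ_{ji} be given real numbers for all pairs (i,j) with 1 ≤ i, j ≤ n except (1,n) and (n,1). For x ∈ ℝ, let S(x) be the n×n symmetric matrix with S(x)_{ij} = σ_{ij} at the specified positions and S(x)_{1n} = S(x)_{n1} = x. Assume the leading principal (n−1)×(n−1) submatrix L = [σ_{ij}]_{i,j=1}^{n−1} is positive definite, let y = L⁻¹ e₁ (so that y₁ = (L⁻¹)₁₁ > 0), and set x° = −(1/y₁) Σ_{j=2}^{n−1} σ_{nj} y_j. Then: (a) det S(x) ≤ det S(x°) for all x ∈ ℝ; and (b) if S(x°) is invertible, then (S(x°)⁻¹)_{1,n} = 0. -/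
/-!
Writing `S x` as `L` bordered by the column `v = w + x • e₁` and the corner `d = σₙₙ`, the Schur
complement gives `det S x = det L * (d - vᵀ L⁻¹ v)`. As `L⁻¹` is positive definite,
`x ↦ vᵀ L⁻¹ v` is a convex quadratic, minimal where its derivative `2 e₁ᵀ L⁻¹ v` vanishes; since
`e₁ᵀ L⁻¹ w = wᵀ y` and `e₁ᵀ L⁻¹ e₁ = y₁`, that is at `x = x°`. The block-inverse formula gives
`(S⁻¹)₁ₙ = -(L⁻¹ v)₁ / (d - vᵀ L⁻¹ v)`, and `(L⁻¹ v)₁ = e₁ᵀ L⁻¹ v` is that same derivative.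
-/

open Matrix

namespace Matrix

variable {m R : Type*}

def bordered (A : Matrix m m R) (u v : m → R) (d : R) : Matrix (m ⊕ Unit) (m ⊕ Unit) R :=
  fromBlocks A (replicateCol Unit u) (replicateRow Unit v) (of fun _ _ => d)

theorem submatrix_eq_bordered {ι : Type*} (M : Matrix ι ι R) (f : m ⊕ Unit → ι) :
    M.submatrix f f = bordered (M.submatrix (f ∘ Sum.inl) (f ∘ Sum.inl))
      (fun i => M (f (.inl i)) (f (.inr ()))) (fun i => M (f (.inr ())) (f (.inl i)))
      (M (f (.inr ())) (f (.inr ()))) := by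
  ext (i | ⟨⟩) (j | ⟨⟩) <;> rfl

section CommRing

variable [Fintype m] [CommRing R]

theorem of_sub_replicateRow_mul_mul_replicateCol (A : Matrix m m R) (u v : m → R) (d : R) :
    (of fun _ _ => d : Matrix Unit Unit R) - replicateRow Unit v * A * replicateCol Unit u =
      of fun _ _ => d - v ⬝ᵥ A *ᵥ u := by
  ext
  rw [Matrix.mul_assoc, ← replicateCol_mulVec]
  rfl

theorem IsSymm.dotProduct_mulVec_comm {N : Matrix m m R} (hN : N.IsSymm) (u v : m → R) :
    u ⬝ᵥ N *ᵥ v = v ⬝ᵥ N *ᵥ u := by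
  rw [← dotProduct_transpose_mulVec, hN.eq]

theorem IsSymm.dotProduct_mulVec_add_smul {N : Matrix m m R} (hN : N.IsSymm) (u e : m → R)
    (t : R) : (u + t • e) ⬝ᵥ N *ᵥ (u + t • e) =
      u ⬝ᵥ N *ᵥ u + 2 * t * (u ⬝ᵥ N *ᵥ e) + t ^ 2 * (e ⬝ᵥ N *ᵥ e) := by
  simp only [mulVec_add, mulVec_smul, add_dotProduct, dotProduct_add, smul_dotProduct,
    dotProduct_smul, smul_eq_mul, hN.dotProduct_mulVec_comm e u]
  ring

variable [DecidableEq m]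

theorem det_bordered {A : Matrix m m R} (hA : IsUnit A.det) (u v : m → R) (d : R) :
    (bordered A u v d).det = A.det * (d - v ⬝ᵥ A⁻¹ *ᵥ u) := by
  let := invertibleOfIsUnitDet A hA
  rw [bordered, det_fromBlocks₁₁, invOf_eq_nonsing_inv, of_sub_replicateRow_mul_mul_replicateCol,
    det_unique (of _)]
  rfl

end CommRing

variable [Fintype m] [DecidableEq m]

/-- When the Schur complement vanishes, both sides are `0` by the junk conventions for `⁻¹`. -/
theorem bordered_inv_apply_inl_inr {K : Type*} [Field K] {A : Matrix m m K} (hA : IsUnit A.det)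
    (u v : m → K) (d : K) (i : m) :
    (bordered A u v d)⁻¹ (.inl i) (.inr ()) = -(A⁻¹ *ᵥ u) i / (d - v ⬝ᵥ A⁻¹ *ᵥ u) := by
  let := invertibleOfIsUnitDet A hA
  by_cases hs : d - v ⬝ᵥ A⁻¹ *ᵥ u = 0
  · rw [hs, div_zero, nonsing_inv_apply_not_isUnit]
    · rfl
    · simp [det_bordered hA, hs]
  let : Invertible ((of fun _ _ => d : Matrix Unit Unit K) -
      replicateRow Unit v * ⅟A * replicateCol Unit u) := invertibleOfIsUnitDet _ (by
    rw [invOf_eq_nonsing_inv, of_sub_replicateRow_mul_mul_replicateCol, det_unique (of _)]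
    exact Ne.isUnit hs)
  let := fromBlocks₁₁Invertible A (replicateCol Unit u) (replicateRow Unit v) (of fun _ _ => d)
  rw [bordered, ← invOf_eq_nonsing_inv, invOf_fromBlocks₁₁_eq, fromBlocks_apply₁₂]
  simp only [invOf_eq_nonsing_inv, of_sub_replicateRow_mul_mul_replicateCol]
  rw [inv_subsingleton (of _), ← replicateCol_mulVec, neg_apply, mul_diagonal, div_eq_mul_inv]
  simp

noncomputable def centralCorner (A : Matrix m m ℝ) (w e : m → ℝ) : ℝ :=
  -(w ⬝ᵥ A⁻¹ *ᵥ e) / (e ⬝ᵥ A⁻¹ *ᵥ e)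

variable {A : Matrix m m ℝ}

theorem PosDef.dotProduct_inv_mulVec_pos (hA : A.PosDef) {e : m → ℝ} (he : e ≠ 0) :
    0 < e ⬝ᵥ A⁻¹ *ᵥ e := by
  simpa using hA.inv.dotProduct_mulVec_pos he

theorem PosDef.isSymm_inv (hA : A.PosDef) : A⁻¹.IsSymm :=
  isHermitian_iff_isSymm.mp hA.inv.isHermitian

theorem PosDef.dotProduct_inv_mulVec_add_centralCorner_smul (hA : A.PosDef) (w : m → ℝ)
    {e : m → ℝ} (he : e ≠ 0) : e ⬝ᵥ A⁻¹ *ᵥ (w + centralCorner A w e • e) = 0 := by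
  have := (hA.dotProduct_inv_mulVec_pos he).ne'
  rw [mulVec_add, mulVec_smul, dotProduct_add, dotProduct_smul, smul_eq_mul,
    hA.isSymm_inv.dotProduct_mulVec_comm e w, centralCorner]
  field_simp
  ring

theorem PosDef.det_bordered_le_centralCorner (hA : A.PosDef) (w : m → ℝ) {e : m → ℝ}
    (he : e ≠ 0) (d x : ℝ) :
    (bordered A (w + x • e) (w + x • e) d).det ≤
      (bordered A (w + centralCorner A w e • e) (w + centralCorner A w e • e) d).det := by
  have hstat := hA.dotProduct_inv_mulVec_add_centralCorner_smul w he
  set x₀ := centralCorner A w e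
  set v₀ := w + x₀ • e
  have hv : w + x • e = v₀ + (x - x₀) • e := by
    simp only [v₀, sub_smul]
    abel
  have hq : (w + x • e) ⬝ᵥ A⁻¹ *ᵥ (w + x • e) =
      v₀ ⬝ᵥ A⁻¹ *ᵥ v₀ + (x - x₀) ^ 2 * (e ⬝ᵥ A⁻¹ *ᵥ e) := by
    rw [hv, hA.isSymm_inv.dotProduct_mulVec_add_smul, hA.isSymm_inv.dotProduct_mulVec_comm v₀ e,
      hstat]
    ring
  have hpos := hA.dotProduct_inv_mulVec_pos he
  rw [det_bordered hA.det_pos.ne'.isUnit, det_bordered hA.det_pos.ne'.isUnit, hq]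
  gcongr
  · exact hA.det_pos.le
  · nlinarith [sq_nonneg (x - x₀)]

end Matrix

def finPredSumUnitEquiv {n : ℕ} (hn : 0 < n) : Fin (n - 1) ⊕ Unit ≃ Fin n :=
  (Equiv.sumCongr (Equiv.refl _) finOneEquiv.symm).trans
    (finSumFinEquiv.trans (finCongr (Nat.sub_add_cancel hn)))

@[simp]
theorem finPredSumUnitEquiv_inl {n : ℕ} (hn : 0 < n) (k : Fin (n - 1)) :
    finPredSumUnitEquiv hn (.inl k) = ⟨k, by omega⟩ :=
  rfl

@[simp]
theorem finPredSumUnitEquiv_inr {n : ℕ} (hn : 0 < n) :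
    finPredSumUnitEquiv hn (.inr ()) = ⟨n - 1, by omega⟩ :=
  rfl

theorem submatrix_finPredSumUnitEquiv_eq_bordered {n : ℕ} (hn : 2 ≤ n)
    {σ : Fin n → Fin n → ℝ} (hσ : ∀ i j : Fin n, σ i j = σ j i)
    {S : ℝ → Matrix (Fin n) (Fin n) ℝ}
    (hS : ∀ (x : ℝ) (i j : Fin n), S x i j =
      if ((i : ℕ) = 0 ∧ (j : ℕ) = n - 1) ∨ ((i : ℕ) = n - 1 ∧ (j : ℕ) = 0) then x else σ i j)
    {L : Matrix (Fin (n - 1)) (Fin (n - 1)) ℝ}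
    (hL : ∀ k l : Fin (n - 1), L k l = σ ⟨k, by omega⟩ ⟨l, by omega⟩)
    {w : Fin (n - 1) → ℝ}
    (hw : ∀ k : Fin (n - 1), w k = if (k : ℕ) = 0 then 0 else σ ⟨n - 1, by omega⟩ ⟨k, by omega⟩)
    (x : ℝ) :
    (S x).submatrix (finPredSumUnitEquiv (by omega)) (finPredSumUnitEquiv (by omega)) =
      bordered L (w + x • Pi.single ⟨0, by omega⟩ 1) (w + x • Pi.single ⟨0, by omega⟩ 1)
        (σ ⟨n - 1, by omega⟩ ⟨n - 1, by omega⟩) := by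
  rw [submatrix_eq_bordered]
  congr 1
  · ext k l
    simp only [submatrix_apply, Function.comp_apply, finPredSumUnitEquiv_inl, hS, hL,
      ite_eq_right_iff]
    omega
  · ext ⟨_ | k, hk⟩
    · simp [hS, hw]
    · simp only [finPredSumUnitEquiv_inl, finPredSumUnitEquiv_inr, hS, Nat.add_eq_zero_iff,
        one_ne_zero, and_false, and_true, false_or, Pi.add_apply, hw, ↓reduceIte, hσ,
        Pi.smul_apply, ne_eq, Fin.ext_iff, not_false_eq_true, Pi.single_eq_of_ne, smul_eq_mul,
        mul_zero, add_zero, ite_eq_right_iff, and_imp]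
      omega
  · ext ⟨_ | k, hk⟩
    · simp [hS, hw]
    · simp only [finPredSumUnitEquiv_inr, finPredSumUnitEquiv_inl, hS, Nat.add_eq_zero_iff,
        one_ne_zero, and_false, or_false, Pi.add_apply, hw, ↓reduceIte, Pi.smul_apply, ne_eq,
        Fin.ext_iff, not_false_eq_true, Pi.single_eq_of_ne, smul_eq_mul, mul_zero, add_zero,
        ite_eq_right_iff, and_imp]
      omega
  · simp only [finPredSumUnitEquiv_inr, hS, and_true, true_and, or_self, ite_eq_right_iff]
    omega

/-- One-step central extension: for an `n × n` partially specified
`(n−2)`-band symmetric matrix (all entries specified except the corners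
`(1,n)` and `(n,1)`, which carry the free variable `x`), with positive
definite leading principal `(n−1) × (n−1)` submatrix `L`, the choice
`x° = −(1/y₁) Σ_{j=2}^{n−1} σ_{nj} y_j` with `y = L⁻¹ e₁` maximizes the
determinant of the completion, and the `(1,n)` entry of the inverse of the
central completion vanishes. -/
theorem stmt_14 (n : ℕ) (hn : 3 ≤ n)
    (σ : Fin n → Fin n → ℝ) (hσ : ∀ i j : Fin n, σ i j = σ j i)
    (S : ℝ → Matrix (Fin n) (Fin n) ℝ)
    (hS : ∀ (x : ℝ) (i j : Fin n), S x i j =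
      if ((i : ℕ) = 0 ∧ (j : ℕ) = n - 1) ∨ ((i : ℕ) = n - 1 ∧ (j : ℕ) = 0)
      then x else σ i j)
    (L : Matrix (Fin (n - 1)) (Fin (n - 1)) ℝ)
    (hL : ∀ k l : Fin (n - 1), L k l =
      σ ⟨(k : ℕ), by have := k.isLt; omega⟩ ⟨(l : ℕ), by have := l.isLt; omega⟩)
    (hLpd : L.PosDef)
    (y : Fin (n - 1) → ℝ)
    (hy : y = L⁻¹.mulVec (Pi.single (⟨0, by omega⟩ : Fin (n - 1)) (1 : ℝ)))
    (x₀ : ℝ)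
    (hx₀ : x₀ = -(1 / y (⟨0, by omega⟩ : Fin (n - 1))) *
      ∑ j : Fin (n - 1), (if (j : ℕ) = 0 then 0 else
        σ ⟨n - 1, by omega⟩ ⟨(j : ℕ), by have := j.isLt; omega⟩ * y j)) :
    (∀ x : ℝ, (S x).det ≤ (S x₀).det) ∧
    (IsUnit (S x₀).det →
      (S x₀)⁻¹ (⟨0, by omega⟩ : Fin n) (⟨n - 1, by omega⟩ : Fin n) = 0) := by
  set z : Fin (n - 1) := ⟨0, by omega⟩
  set w : Fin (n - 1) → ℝ := fun k => if (k : ℕ) = 0 then 0 else σ ⟨n - 1, by omega⟩ ⟨k, by omega⟩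
  set e := finPredSumUnitEquiv (n := n) (by omega)
  have hblock := submatrix_finPredSumUnitEquiv_eq_bordered (by omega) hσ hS hL (w := w)
    (fun _ => rfl)
  have he₀ : (Pi.single z 1 : Fin (n - 1) → ℝ) ≠ 0 := Pi.single_ne_zero_iff.mpr one_ne_zero
  have hx₀ : x₀ = centralCorner L w (Pi.single z 1) := by
    rw [hx₀, centralCorner, ← hy, single_one_dotProduct, dotProduct]
    simp only [w, ite_mul, zero_mul]
    ring
  refine ⟨fun x => ?_, fun _ => ?_⟩
  · rw [← det_submatrix_equiv_self e, ← det_submatrix_equiv_self e, hblock, hblock, hx₀]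
    exact hLpd.det_bordered_le_centralCorner w he₀ _ x
  · have hcorner : (S x₀)⁻¹ ⟨0, by omega⟩ ⟨n - 1, by omega⟩ =
        ((S x₀).submatrix e e)⁻¹ (.inl z) (.inr ()) := by
      rw [inv_submatrix_equiv]
      rfl
    rw [hcorner, hblock, bordered_inv_apply_inl_inr hLpd.det_pos.ne'.isUnit,
      ← single_one_dotProduct z (L⁻¹ *ᵥ _), hx₀,
      hLpd.dotProduct_inv_mulVec_add_centralCorner_smul w he₀, neg_zero, zero_div]
end
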